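/- arXiv:2106.06347 — 5 statements merged into one kernel-verified Lean document; each statement's English description precedes it below -/
import Mathlib

section
/- For all Borel probability measures P and Q on Ξ, the unique minimizers satisfy ‖z(Q) − z(P)‖_H ≤ 2·√(2/α) · d_mi(P,Q)^{1/2}. -/
open MeasureTheory Filter Topology
open scoped RealInnerProductSpace ENNReal

private lemma pettis_measurable {Ξ V : Type*} [MeasurableSpace Ξ]
    [NormedAddCommGroup V] [InnerProductSpace ℝ V] [CompleteSpace V]
    [TopologicalSpace.SeparableSpace V] [MeasurableSpace V] [BorelSpace V]
    (F : Ξ → V) (h : ∀ v : V, Measurable fun ξ => ⟪F ξ, v⟫) : Measurable F := by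
  obtain ⟨w, b, hb⟩ := exists_hilbertBasis ℝ V
  haveI : Countable w := by
    have hd : Pairwise (Function.onFun Disjoint fun i : w => Metric.ball (b i) 2⁻¹) := by
      intro i j hij
      apply Set.disjoint_left.mpr
      intro x hxi hxj
      have h2 : ‖b i - b j‖ ^ 2 = 2 := by
        rw [norm_sub_sq_real, b.orthonormal.1 i, b.orthonormal.1 j, b.orthonormal.2 hij]; norm_num
      rw [Metric.mem_ball] at hxi hxj
      have h3 : dist (b i) (b j) < 1 := by
        have ht := dist_triangle (b i) x (b j)
        rw [dist_comm] at hxi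
        linarith
      rw [dist_eq_norm] at h3
      nlinarith [norm_nonneg (b i - b j)]
    exact hd.countable_of_isOpen_disjoint (fun i => Metric.isOpen_ball)
      (fun i => Metric.nonempty_ball.mpr (by norm_num))
  have hmeas : ∀ s : Finset w, Measurable fun ξ => ∑ i ∈ s, b.repr (F ξ) i • (b i : V) := by
    intro s
    apply Finset.measurable_sum
    intro i _
    have he : (fun ξ => b.repr (F ξ) i • (b i : V)) = fun ξ => (⟪F ξ, b i⟫) • (b i : V) := by
      funext ξ; rw [b.repr_apply_apply, real_inner_comm]
    rw [he]
    exact (h (b i)).smul_const _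
  exact measurable_of_tendsto_metrizable' atTop hmeas
    (tendsto_pi_nhds.mpr fun ξ => (b.hasSum_repr (F ξ)))

private lemma measurable_clm_comp {Ξ V W : Type*} [MeasurableSpace Ξ]
    [NormedAddCommGroup V] [NormedSpace ℝ V] [MeasurableSpace V] [BorelSpace V]
    [SecondCountableTopology V]
    [NormedAddCommGroup W] [NormedSpace ℝ W] [MeasurableSpace W] [BorelSpace W]
    [SecondCountableTopology W]
    (B : Ξ → V →L[ℝ] W) (hB : ∀ v : V, Measurable fun ξ => B ξ v)
    {F : Ξ → V} (hF : Measurable F) : Measurable fun ξ => B ξ (F ξ) := by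
  have hs : ∀ s : SimpleFunc Ξ V, Measurable fun ξ => B ξ (s ξ) := by
    intro s
    classical
    refine SimpleFunc.induction (motive := fun s : SimpleFunc Ξ V =>
      Measurable fun ξ => B ξ (s ξ)) ?_ ?_ s
    · intro c t ht
      have he : (fun ξ => B ξ ((SimpleFunc.piecewise t ht (SimpleFunc.const Ξ c)
          (SimpleFunc.const Ξ 0)) ξ)) = fun ξ => if ξ ∈ t then B ξ c else B ξ 0 := by
        funext ξ; by_cases hξ : ξ ∈ t <;>
          simp [SimpleFunc.piecewise_apply, hξ]
      rw [he]
      exact Measurable.ite ht (hB c) (hB 0)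
    · intro p q _ hp hq
      have he : (fun ξ => B ξ ((p + q) ξ)) = fun ξ => B ξ (p ξ) + B ξ (q ξ) := by
        funext ξ; simp [map_add]
      rw [he]
      exact hp.add hq
  have hsm := hF.stronglyMeasurable
  apply measurable_of_tendsto_metrizable (fun n => hs (hsm.approx n))
  exact tendsto_pi_nhds.mpr fun ξ => ((B ξ).continuous.tendsto _).comp (hsm.tendsto_approx ξ)

set_option maxHeartbeats 4000000 in
/-- `‖z(Q) - z(P)‖ ≤ 2√(2/α)·d_mi(P,Q)^{1/2}`. -/
theorem statement3
    {V H : Type*} [NormedAddCommGroup V] [InnerProductSpace ℝ V] [CompleteSpace V]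
    [NormedAddCommGroup H] [InnerProductSpace ℝ H] [CompleteSpace H]
    [TopologicalSpace.SeparableSpace H] [MeasurableSpace H] [BorelSpace H]
    {Ξ : Type*} [MetricSpace Ξ] [MeasurableSpace Ξ] [BorelSpace Ξ]
    (E : V →L[ℝ] H) (hE : Function.Injective E)
    (A : Ξ → V →L[ℝ] (V →L[ℝ] ℝ))
    (hAmeas : ∀ u v : V, Measurable fun ξ => A ξ u v)
    (γ L : ℝ) (hγ : 0 < γ) (hγL : γ ≤ L)
    (hcoerc : ∀ ξ, ∀ u : V, γ * ‖u‖ ^ 2 ≤ A ξ u u)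
    (hbound : ∀ ξ, ∀ u : V, ‖A ξ u‖ ≤ L * ‖u‖)
    (g : Ξ → H) (hgmeas : Measurable g) (Cg : ℝ) (hgb : ∀ ξ, ‖g ξ‖ ≤ Cg)
    (Zad : Set H) (hZne : Zad.Nonempty) (hZcl : IsClosed Zad)
    (hZbd : Bornology.IsBounded Zad) (hZcvx : Convex ℝ Zad)
    (α : ℝ) (hα : 0 < α) (ut : H)
    (u : H → Ξ → V)
    (hu : ∀ z ξ, ∀ v : V, A ξ (u z ξ) v = ⟪z + g ξ, E v⟫)
    (f : H → Ξ → ℝ)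
    (hf : ∀ z ξ, f z ξ = (1 / 2) * ‖E (u z ξ) - ut‖ ^ 2 + (α / 2) * ‖z‖ ^ 2)
    (P Q : Measure Ξ) [IsProbabilityMeasure P] [IsProbabilityMeasure Q]
    (FP FQ : H → ℝ) (hFP : ∀ z, FP z = ∫ ξ, f z ξ ∂P) (hFQ : ∀ z, FQ z = ∫ ξ, f z ξ ∂Q)
    (zP zQ : H)
    (hzP : zP ∈ Zad ∧ ∀ z ∈ Zad, FP zP ≤ FP z)
    (hzQ : zQ ∈ Zad ∧ ∀ z ∈ Zad, FQ zQ ≤ FQ z)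
    (dmi : ℝ)
    (hdmi : dmi = sSup ((fun z => |(∫ ξ, f z ξ ∂P) - ∫ ξ, f z ξ ∂Q|) '' Zad)) :
    ‖zQ - zP‖ ≤ 2 * Real.sqrt (2 / α) * Real.sqrt dmi := by
  classical
  borelize V
  haveI : SecondCountableTopology H := UniformSpace.secondCountable_of_separable H
  have hL : 0 < L := lt_of_lt_of_le hγ hγL
  -- Ξ is nonempty (there is a probability measure on it)
  have hΞ : Nonempty Ξ := by
    by_contra h
    have h0 : (Set.univ : Set Ξ) = ∅ := Set.univ_eq_empty_iff.mpr (not_nonempty_iff.mp h)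
    have h1 := measure_univ (μ := P)
    rw [h0, measure_empty] at h1
    exact zero_ne_one h1
  have hCg0 : 0 ≤ Cg := (norm_nonneg (g hΞ.some)).trans (hgb _)
  -- the adjoint of E
  set T := ContinuousLinearMap.adjoint E with hTdef
  -- V is separable
  have hdense : DenseRange T := by
    have hKT : (LinearMap.range (T : H →ₗ[ℝ] V))ᗮ = ⊥ := by
      rw [Submodule.eq_bot_iff]
      intro v hv
      have h1 : ⟪T (E v), v⟫ = 0 := hv _ ⟨E v, rfl⟩
      rw [ContinuousLinearMap.adjoint_inner_left] at h1
      have h2 : E v = 0 := inner_self_eq_zero.mp h1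
      exact hE (by rw [h2, map_zero])
    have h2 : (LinearMap.range (T : H →ₗ[ℝ] V)).topologicalClosure = ⊤ :=
      Submodule.topologicalClosure_eq_top_iff.mpr hKT
    rw [DenseRange, dense_iff_closure_eq]
    have h3 := congrArg (fun K : Submodule ℝ V => (K : Set V)) h2
    simpa [Submodule.topologicalClosure_coe, LinearMap.coe_range, ContinuousLinearMap.coe_coe] using h3
  haveI : TopologicalSpace.SeparableSpace V := hdense.separableSpace T.continuous
  haveI : SecondCountableTopology V := UniformSpace.secondCountable_of_separable V
  -- the Lax-Milgram operator
  set J : (V →L[ℝ] ℝ) →L[ℝ] V :=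
    (InnerProductSpace.toDual ℝ V).symm.toLinearIsometry.toContinuousLinearMap with hJdef
  set S : Ξ → V →L[ℝ] V := fun ξ => J.comp (A ξ) with hSdef
  have hSinner : ∀ ξ (w v : V), ⟪S ξ w, v⟫ = A ξ w v := by
    intro ξ w v
    simp [hSdef, hJdef, InnerProductSpace.toDual_symm_apply]
  have hSmeas : ∀ w : V, Measurable fun ξ => S ξ w := by
    intro w
    apply pettis_measurable
    intro v
    have he : (fun ξ => ⟪S ξ w, v⟫) = fun ξ => A ξ w v := funext fun ξ => hSinner ξ w v
    rw [he]; exact hAmeas w v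
  have hSnorm : ∀ ξ (w : V), ‖S ξ w‖ ≤ L * ‖w‖ := by
    intro ξ w
    have : ‖S ξ w‖ = ‖A ξ w‖ := by
      simp [hSdef, hJdef]
    rw [this]; exact hbound ξ w
  have hScoerc : ∀ ξ (w : V), γ * ‖w‖ ^ 2 ≤ ⟪S ξ w, w⟫ := by
    intro ξ w; rw [hSinner]; exact hcoerc ξ w
  -- the fixed point equation
  have hufix : ∀ z ξ, S ξ (u z ξ) = T (z + g ξ) := by
    intro z ξ
    apply ext_inner_right ℝ
    intro v
    rw [hSinner, hu, ContinuousLinearMap.adjoint_inner_left]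
  -- a priori bound on u
  have hub : ∀ z ξ, ‖u z ξ‖ ≤ ‖T‖ * (‖z‖ + Cg) / γ := by
    intro z ξ
    have h1 : γ * ‖u z ξ‖ ^ 2 ≤ ⟪T (z + g ξ), u z ξ⟫ := by
      rw [ContinuousLinearMap.adjoint_inner_left, ← hu z ξ (u z ξ)]
      exact hcoerc ξ (u z ξ)
    have h2 : ⟪T (z + g ξ), u z ξ⟫ ≤ ‖T‖ * (‖z‖ + Cg) * ‖u z ξ‖ := by
      calc ⟪T (z + g ξ), u z ξ⟫ ≤ ‖T (z + g ξ)‖ * ‖u z ξ‖ := real_inner_le_norm _ _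
        _ ≤ (‖T‖ * ‖z + g ξ‖) * ‖u z ξ‖ :=
            mul_le_mul_of_nonneg_right (T.le_opNorm _) (norm_nonneg _)
        _ ≤ ‖T‖ * (‖z‖ + Cg) * ‖u z ξ‖ :=
            mul_le_mul_of_nonneg_right (mul_le_mul_of_nonneg_left
              ((norm_add_le _ _).trans (add_le_add_right (hgb ξ) _)) (norm_nonneg _))
              (norm_nonneg _)
    have hC0 : 0 ≤ ‖T‖ * (‖z‖ + Cg) := by positivity
    rcases (norm_nonneg (u z ξ)).eq_or_lt with h | h
    · rw [← h]; positivity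
    · rw [le_div_iff₀ hγ]
      have h3 : (‖u z ξ‖ * γ) * ‖u z ξ‖ ≤ (‖T‖ * (‖z‖ + Cg)) * ‖u z ξ‖ := by
        calc (‖u z ξ‖ * γ) * ‖u z ξ‖ = γ * ‖u z ξ‖ ^ 2 := by ring
          _ ≤ ‖T‖ * (‖z‖ + Cg) * ‖u z ξ‖ := h1.trans h2
      exact le_of_mul_le_mul_right h3 h
  -- measurability of u z
  have humeas : ∀ z : H, Measurable (u z) := by
    intro z
    set k := γ / L ^ 2 with hk
    have hk0 : 0 < k := by positivity
    have hrr : (0:ℝ) ≤ 1 - γ ^ 2 / L ^ 2 := by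
      have : γ ^ 2 ≤ L ^ 2 := by nlinarith
      have : γ ^ 2 / L ^ 2 ≤ 1 := by
        rw [div_le_one (by positivity)]; exact this
      linarith
    set r := Real.sqrt (1 - γ ^ 2 / L ^ 2) with hr
    have hr0 : 0 ≤ r := Real.sqrt_nonneg _
    have hr2 : r ^ 2 = 1 - γ ^ 2 / L ^ 2 := Real.sq_sqrt hrr
    have hr1 : r < 1 := by
      have hpos : 0 < γ ^ 2 / L ^ 2 := by positivity
      nlinarith [sq_nonneg (r - 1), hpos, hr2]
    set bf : Ξ → V := fun ξ => T (z + g ξ) with hbf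
    have hbmeas : Measurable bf := T.continuous.measurable.comp (measurable_const.add hgmeas)
    set step : (Ξ → V) → (Ξ → V) := fun p ξ => p ξ + k • (bf ξ - S ξ (p ξ)) with hstep
    set seq : ℕ → Ξ → V := fun n => step^[n] (fun _ => 0) with hseq
    have hseqS : ∀ n, seq (n + 1) = step (seq n) := fun n =>
      Function.iterate_succ_apply' step n _
    have hseqmeas : ∀ n, Measurable (seq n) := by
      intro n
      induction n with
      | zero => exact measurable_const
      | succ n ih =>
        rw [hseqS n]
        have h1 : Measurable fun ξ => S ξ (seq n ξ) := measurable_clm_comp S hSmeas ih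
        exact ih.add ((hbmeas.sub h1).const_smul k)
    have hcontr : ∀ ξ (w : V), ‖step (fun _ => w) ξ - u z ξ‖ ≤ r * ‖w - u z ξ‖ := by
      intro ξ w
      have hEq : step (fun _ => w) ξ - u z ξ = (w - u z ξ) - k • S ξ (w - u z ξ) := by
        simp only [hstep, hbf]
        rw [← hufix z ξ, ← map_sub, show u z ξ - w = -(w - u z ξ) by abel, map_neg, smul_neg]
        abel
      rw [hEq]
      set d := w - u z ξ with hd
      have hexp : ‖d - k • S ξ d‖ ^ 2
          = ‖d‖ ^ 2 - 2 * k * ⟪S ξ d, d⟫ + k ^ 2 * ‖S ξ d‖ ^ 2 := by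
        rw [norm_sub_sq_real, real_inner_smul_right, norm_smul, Real.norm_eq_abs,
          abs_of_pos hk0, real_inner_comm]
        ring
      have h1 : γ * ‖d‖ ^ 2 ≤ ⟪S ξ d, d⟫ := hScoerc ξ d
      have h2 : ‖S ξ d‖ ^ 2 ≤ (L * ‖d‖) ^ 2 := by
        have := hSnorm ξ d
        nlinarith [norm_nonneg (S ξ d)]
      have hcoef : 1 - 2 * k * γ + k ^ 2 * L ^ 2 = r ^ 2 := by
        rw [hr2, hk]; field_simp; ring
      have hsq : ‖d - k • S ξ d‖ ^ 2 ≤ (r * ‖d‖) ^ 2 := by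
        rw [hexp]
        nlinarith [sq_nonneg ‖d‖, hk0.le]
      calc ‖d - k • S ξ d‖ = Real.sqrt (‖d - k • S ξ d‖ ^ 2) :=
            (Real.sqrt_sq (norm_nonneg _)).symm
        _ ≤ Real.sqrt ((r * ‖d‖) ^ 2) := Real.sqrt_le_sqrt hsq
        _ = r * ‖d‖ := Real.sqrt_sq (by positivity)
    have herr : ∀ ξ n, ‖seq n ξ - u z ξ‖ ≤ r ^ n * ‖u z ξ‖ := by
      intro ξ n
      induction n with
      | zero => simp [hseq]
      | succ n ih =>
        have h1 : ‖seq (n+1) ξ - u z ξ‖ ≤ r * ‖seq n ξ - u z ξ‖ := by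
          rw [hseqS n]
          have := hcontr ξ (seq n ξ)
          simpa [hstep] using this
        calc ‖seq (n+1) ξ - u z ξ‖ ≤ r * ‖seq n ξ - u z ξ‖ := h1
          _ ≤ r * (r ^ n * ‖u z ξ‖) := by gcongr
          _ = r ^ (n+1) * ‖u z ξ‖ := by ring
    have hlim : Tendsto seq atTop (𝓝 (u z)) := by
      rw [tendsto_pi_nhds]
      intro ξ
      rw [tendsto_iff_norm_sub_tendsto_zero]
      apply squeeze_zero (fun n => norm_nonneg _) (fun n => herr ξ n)
      simpa using (tendsto_pow_atTop_nhds_zero_of_lt_one hr0 hr1).mul_const ‖u z ξ‖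
    exact measurable_of_tendsto_metrizable hseqmeas hlim
  -- measurability, nonnegativity and boundedness of f
  have hfmeas : ∀ z : H, Measurable fun ξ => f z ξ := by
    intro z
    simp only [hf]
    have h1 : Measurable fun ξ => E (u z ξ) := E.continuous.measurable.comp (humeas z)
    have h2 : Measurable fun ξ => E (u z ξ) - ut := h1.sub measurable_const
    exact ((h2.norm.pow_const 2).const_mul _).add measurable_const
  have hfnonneg : ∀ z ξ, 0 ≤ f z ξ := by
    intro z ξ; rw [hf]; positivity
  set Bz : H → ℝ := fun z =>
    (1/2) * (‖E‖ * (‖T‖ * (‖z‖ + Cg) / γ) + ‖ut‖) ^ 2 + (α/2) * ‖z‖ ^ 2 with hBz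
  have hfle : ∀ z ξ, f z ξ ≤ Bz z := by
    intro z ξ
    rw [hf]
    have h1 : ‖E (u z ξ) - ut‖ ≤ ‖E‖ * (‖T‖ * (‖z‖ + Cg) / γ) + ‖ut‖ := by
      calc ‖E (u z ξ) - ut‖ ≤ ‖E (u z ξ)‖ + ‖ut‖ := norm_sub_le _ _
        _ ≤ ‖E‖ * ‖u z ξ‖ + ‖ut‖ := add_le_add_left (E.le_opNorm _) _
        _ ≤ ‖E‖ * (‖T‖ * (‖z‖ + Cg) / γ) + ‖ut‖ :=
            add_le_add_left (mul_le_mul_of_nonneg_left (hub z ξ) (norm_nonneg _)) _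
    have h2 : ‖E (u z ξ) - ut‖ ^ 2 ≤ (‖E‖ * (‖T‖ * (‖z‖ + Cg) / γ) + ‖ut‖) ^ 2 :=
      pow_le_pow_left₀ (norm_nonneg _) h1 2
    rw [hBz]
    dsimp only
    linarith
  have hint : ∀ (μ : Measure Ξ) [IsProbabilityMeasure μ], ∀ z : H,
      Integrable (fun ξ => f z ξ) μ := by
    intro μ _ z
    refine ⟨(hfmeas z).aestronglyMeasurable, ?_⟩
    apply HasFiniteIntegral.of_bounded (C := Bz z)
    exact ae_of_all _ fun ξ => by
      rw [Real.norm_eq_abs, abs_of_nonneg (hfnonneg z ξ)]; exact hfle z ξ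
  -- the midpoint
  set m : H := (2:ℝ)⁻¹ • (zP + zQ) with hm
  have hmZ : m ∈ Zad := by
    have h := hZcvx hzP.1 hzQ.1 (by norm_num : (0:ℝ) ≤ 1/2) (by norm_num : (0:ℝ) ≤ 1/2)
      (by norm_num)
    have he : ((1:ℝ)/2) • zP + ((1:ℝ)/2) • zQ = m := by
      rw [hm, smul_add]; norm_num
    rwa [he] at h
  have humid : ∀ ξ, u m ξ = (2:ℝ)⁻¹ • (u zP ξ + u zQ ξ) := by
    intro ξ
    have hw : ∀ v : V, A ξ (u m ξ - (2:ℝ)⁻¹ • (u zP ξ + u zQ ξ)) v = 0 := by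
      intro v
      have e1 := hu m ξ v
      have e2 := hu zP ξ v
      have e3 := hu zQ ξ v
      simp only [map_sub, _root_.map_smul, map_add, ContinuousLinearMap.sub_apply,
        ContinuousLinearMap.smul_apply, ContinuousLinearMap.add_apply, smul_eq_mul]
      rw [e1, e2, e3, hm]
      simp only [inner_add_left, real_inner_smul_left]
      ring
    set w := u m ξ - (2:ℝ)⁻¹ • (u zP ξ + u zQ ξ) with hwdef
    have hc := hcoerc ξ w
    rw [hw w] at hc
    have hw0 : w = 0 := by
      have : ‖w‖ ^ 2 = 0 := le_antisymm (by nlinarith) (by positivity)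
      have := pow_eq_zero_iff (n := 2) (by norm_num) |>.mp this
      exact norm_eq_zero.mp this
    have := sub_eq_zero.mp hw0
    exact this
  -- pointwise strong convexity inequality
  have hkey : ∀ ξ, f m ξ ≤ (f zP ξ + f zQ ξ) / 2 - (α/8) * ‖zQ - zP‖ ^ 2 := by
    intro ξ
    rw [hf, hf, hf, humid ξ]
    set a := E (u zP ξ) - ut with ha
    set b' := E (u zQ ξ) - ut with hb'
    have hE2 : E ((2:ℝ)⁻¹ • (u zP ξ + u zQ ξ)) - ut = (2:ℝ)⁻¹ • (a + b') := by
      rw [_root_.map_smul, map_add, ha, hb']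
      module
    rw [hE2]
    have h1 : ‖(2:ℝ)⁻¹ • (a + b')‖ ^ 2 ≤ (‖a‖ ^ 2 + ‖b'‖ ^ 2) / 2 := by
      have hab := norm_add_le a b'
      have h2 : ‖(2:ℝ)⁻¹ • (a + b')‖ = 2⁻¹ * ‖a + b'‖ := by
        rw [norm_smul, Real.norm_eq_abs]; norm_num
      rw [h2]
      nlinarith [norm_nonneg a, norm_nonneg b', norm_nonneg (a + b'), sq_nonneg (‖a‖ - ‖b'‖)]
    have h3 : ‖m‖ ^ 2 = (‖zP‖ ^ 2 + ‖zQ‖ ^ 2) / 2 - ‖zQ - zP‖ ^ 2 / 4 := by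
      have h4 : ‖m‖ = 2⁻¹ * ‖zP + zQ‖ := by
        rw [hm, norm_smul, Real.norm_eq_abs]; norm_num
      have h5 := norm_add_sq_real zP zQ
      have h6 := norm_sub_sq_real zQ zP
      have h7 := real_inner_comm zP zQ
      rw [h4, mul_pow]
      nlinarith
    rw [h3]
    linarith
  -- integrated strong convexity inequality
  have hmain : ∀ (μ : Measure Ξ) [IsProbabilityMeasure μ],
      (∫ ξ, f m ξ ∂μ) ≤ ((∫ ξ, f zP ξ ∂μ) + ∫ ξ, f zQ ξ ∂μ) / 2
        - (α/8) * ‖zQ - zP‖ ^ 2 := by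
    intro μ _
    have hintd : Integrable (fun ξ => (f zP ξ + f zQ ξ) / 2) μ := by
      exact ((hint μ zP).add (hint μ zQ)).div_const 2
    have hint2 : Integrable (fun ξ => (f zP ξ + f zQ ξ) / 2
        - (α/8) * ‖zQ - zP‖ ^ 2) μ := by
      exact hintd.sub (integrable_const _)
    have h1 := integral_mono (hint μ m) hint2 hkey
    rwa [integral_sub hintd (integrable_const _),
      integral_div, integral_add (hint μ zP) (hint μ zQ), integral_const, probReal_univ,
      one_smul] at h1
  have hPineq : (∫ ξ, f zP ξ ∂P) + 2 * ((α/8) * ‖zQ - zP‖ ^ 2) ≤ ∫ ξ, f zQ ξ ∂P := by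
    have h0 := hzP.2 m hmZ
    rw [hFP zP, hFP m] at h0
    have h1 := hmain P
    linarith
  have hQineq : (∫ ξ, f zQ ξ ∂Q) + 2 * ((α/8) * ‖zQ - zP‖ ^ 2) ≤ ∫ ξ, f zP ξ ∂Q := by
    have h0 := hzQ.2 m hmZ
    rw [hFQ zQ, hFQ m] at h0
    have h1 := hmain Q
    linarith
  -- bounds on dmi
  obtain ⟨R, hR⟩ := isBounded_iff_forall_norm_le.mp hZbd
  have hBB : ∀ z ∈ Zad, Bz z ≤ Bz 0 + Bz 0 + ((1/2) * (‖E‖ * (‖T‖ * (R + Cg) / γ) + ‖ut‖) ^ 2 + (α/2) * R ^ 2) := by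
    intro z hz
    have hzR := hR z hz
    have hR0 : 0 ≤ R := (norm_nonneg z).trans hzR
    have h1 : Bz z ≤ (1/2) * (‖E‖ * (‖T‖ * (R + Cg) / γ) + ‖ut‖) ^ 2 + (α/2) * R ^ 2 := by
      rw [hBz]
      dsimp only
      have ht1 : ‖T‖ * (‖z‖ + Cg) ≤ ‖T‖ * (R + Cg) :=
        mul_le_mul_of_nonneg_left (by linarith) (norm_nonneg _)
      have hm1 : ‖E‖ * (‖T‖ * (‖z‖ + Cg) / γ) + ‖ut‖
          ≤ ‖E‖ * (‖T‖ * (R + Cg) / γ) + ‖ut‖ := by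
        simp only [div_eq_mul_inv]
        exact add_le_add_left (mul_le_mul_of_nonneg_left
          (mul_le_mul_of_nonneg_right ht1 (by positivity)) (norm_nonneg _)) _
      have hx : (0:ℝ) ≤ ‖E‖ * (‖T‖ * (‖z‖ + Cg) / γ) + ‖ut‖ := by positivity
      have hsq := pow_le_pow_left₀ hx hm1 2
      have hz2 : ‖z‖ ^ 2 ≤ R ^ 2 := pow_le_pow_left₀ (norm_nonneg z) hzR 2
      have hz3 := mul_le_mul_of_nonneg_left hz2 (by positivity : (0:ℝ) ≤ α/2)
      linarith
    have h2 : 0 ≤ Bz 0 := by rw [hBz]; positivity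
    exact h1.trans (le_add_of_nonneg_left (by linarith))
  set BB : ℝ := Bz 0 + Bz 0 + ((1/2) * (‖E‖ * (‖T‖ * (R + Cg) / γ) + ‖ut‖) ^ 2 + (α/2) * R ^ 2) with hBBdef
  have hIle : ∀ (μ : Measure Ξ) [IsProbabilityMeasure μ], ∀ z ∈ Zad,
      0 ≤ (∫ ξ, f z ξ ∂μ) ∧ (∫ ξ, f z ξ ∂μ) ≤ BB := by
    intro μ _ z hz
    constructor
    · exact integral_nonneg (hfnonneg z)
    · have h1 := integral_mono (hint μ z) (integrable_const BB)
        (fun ξ => (hfle z ξ).trans (hBB z hz))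
      rwa [integral_const, probReal_univ, one_smul] at h1
  have hbdd : BddAbove ((fun z => |(∫ ξ, f z ξ ∂P) - ∫ ξ, f z ξ ∂Q|) '' Zad) := by
    refine ⟨BB, ?_⟩
    rintro y ⟨z, hz, rfl⟩
    obtain ⟨h1, h2⟩ := hIle P z hz
    obtain ⟨h3, h4⟩ := hIle Q z hz
    rw [abs_le]
    constructor <;> linarith
  have hdQ : |(∫ ξ, f zQ ξ ∂P) - ∫ ξ, f zQ ξ ∂Q| ≤ dmi :=
    hdmi ▸ le_csSup hbdd ⟨zQ, hzQ.1, rfl⟩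
  have hdP : |(∫ ξ, f zP ξ ∂P) - ∫ ξ, f zP ξ ∂Q| ≤ dmi :=
    hdmi ▸ le_csSup hbdd ⟨zP, hzP.1, rfl⟩
  have hdmi0 : 0 ≤ dmi := (abs_nonneg _).trans hdQ
  -- final arithmetic
  have h4c : 4 * ((α/8) * ‖zQ - zP‖ ^ 2) ≤ 2 * dmi := by
    have e1 : (∫ ξ, f zQ ξ ∂P) - (∫ ξ, f zQ ξ ∂Q) ≤ dmi :=
      (le_abs_self _).trans hdQ
    have e2 : (∫ ξ, f zP ξ ∂Q) - (∫ ξ, f zP ξ ∂P) ≤ dmi := by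
      have := (neg_le_abs _).trans hdP
      linarith
    linarith
  have hd2 : ‖zQ - zP‖ ^ 2 ≤ 8 / α * dmi := by
    rw [div_mul_eq_mul_div, le_div_iff₀ hα]
    nlinarith
  have hrhs : (2 * Real.sqrt (2/α) * Real.sqrt dmi) ^ 2 = 8 / α * dmi := by
    rw [mul_pow, mul_pow, Real.sq_sqrt (by positivity), Real.sq_sqrt hdmi0]
    ring
  calc ‖zQ - zP‖ = Real.sqrt (‖zQ - zP‖ ^ 2) := (Real.sqrt_sq (norm_nonneg _)).symm
    _ ≤ Real.sqrt ((2 * Real.sqrt (2/α) * Real.sqrt dmi) ^ 2) := by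
        rw [hrhs]; exact Real.sqrt_le_sqrt hd2
    _ = 2 * Real.sqrt (2/α) * Real.sqrt dmi := Real.sqrt_sq (by positivity)
end

section
/- For all Borel probability measures P and Q on Ξ, the unique minimizers satisfy (α/8)·‖z(Q) − z(P)‖_H ≤ sup_{z ∈ Z_ad} ‖F'_P(z) − F'_Q(z)‖_{H*}, where F'_P(z) denotes the Gâteaux derivative of F_P at z and the norm is the operator norm on bounded linear functionals on H. -/
open MeasureTheory Filter Topology
open scoped RealInnerProductSpace ENNReal

/-- Pettis measurability: weakly measurable into a separable Hilbert-like space is measurable. -/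
theorem aux_pettis {Ξ V : Type*} [MeasurableSpace Ξ]
    [NormedAddCommGroup V] [InnerProductSpace ℝ V]
    [TopologicalSpace.SeparableSpace V]
    [MeasurableSpace V] [BorelSpace V]
    (ψ : Ξ → V) (h : ∀ v : V, Measurable fun ξ => ⟪ψ ξ, v⟫) :
    Measurable ψ := by
  have : Nonempty V := ⟨0⟩
  set d : ℕ → V := TopologicalSpace.denseSeq V with hdd
  have hd : DenseRange d := TopologicalSpace.denseRange_denseSeq V
  have hball : ∀ (x : V) (r : ℝ), 0 ≤ r → MeasurableSet {ξ | ‖ψ ξ - x‖ ≤ r} := by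
    intro x r hr
    have hset : {ξ | ‖ψ ξ - x‖ ≤ r} = ⋂ n, {ξ | ⟪ψ ξ, d n⟫ - ⟪x, d n⟫ ≤ r * ‖d n‖} := by
      ext ξ
      simp only [Set.mem_setOf_eq, Set.mem_iInter]
      constructor
      · intro hle n
        have h1 := real_inner_le_norm (ψ ξ - x) (d n)
        have h2 : ⟪ψ ξ - x, d n⟫ = ⟪ψ ξ, d n⟫ - ⟪x, d n⟫ := inner_sub_left _ _ _
        nlinarith [norm_nonneg (d n), norm_nonneg (ψ ξ - x)]
      · intro hall
        set w := ψ ξ - x with hw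
        have key : ‖w‖ ^ 2 ≤ r * ‖w‖ := by
          by_contra hcon
          push_neg at hcon
          have hden : (0:ℝ) < ‖w‖ + r + 1 := by
            have := norm_nonneg w; linarith
          set ε := (‖w‖ ^ 2 - r * ‖w‖) / (‖w‖ + r + 1) with hε
          have hεpos : 0 < ε := div_pos (by linarith) hden
          obtain ⟨n, hn⟩ := Metric.denseRange_iff.1 hd w ε hεpos
          rw [dist_eq_norm] at hn
          have h2 : ⟪w, d n⟫ ≤ r * ‖d n‖ := by
            rw [hw, inner_sub_left]; exact hall n
          have h3 : ‖d n‖ ≤ ‖w‖ + ε := by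
            have h4 := norm_sub_norm_le (d n) w
            have h5 : ‖d n - w‖ = ‖w - d n‖ := norm_sub_rev _ _
            linarith
          have h5 : ⟪w, w - d n⟫ ≤ ‖w‖ * ε := by
            have h6 := real_inner_le_norm w (w - d n)
            nlinarith [norm_nonneg w]
          have h6 : ⟪w, w - d n⟫ = ⟪w, w⟫ - ⟪w, d n⟫ := inner_sub_right _ _ _
          have h7 : ⟪w, w⟫ = ‖w‖ ^ 2 := real_inner_self_eq_norm_sq w
          have hεeq : ε * (‖w‖ + r + 1) = ‖w‖ ^ 2 - r * ‖w‖ :=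
            div_mul_cancel₀ _ (ne_of_gt hden)
          nlinarith [mul_le_mul_of_nonneg_left h3 hr, norm_nonneg w]
        rcases eq_or_lt_of_le (norm_nonneg w) with h0 | h0
        · rw [← h0]; exact hr
        · nlinarith
    rw [hset]
    exact MeasurableSet.iInter fun n =>
      measurableSet_le ((h (d n)).sub measurable_const) measurable_const
  apply measurable_of_isOpen
  intro U hU
  set S : Set (ℕ × ℚ) := {p | 0 < (p.2 : ℝ) ∧ Metric.closedBall (d p.1) p.2 ⊆ U} with hS
  have hcover : ψ ⁻¹' U = ⋃ p ∈ S, {ξ | ‖ψ ξ - d p.1‖ ≤ (p.2 : ℝ)} := by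
    ext ξ
    simp only [Set.mem_preimage, Set.mem_iUnion, Set.mem_setOf_eq]
    constructor
    · intro hmem
      obtain ⟨ε, hε, hballU⟩ := Metric.isOpen_iff.1 hU (ψ ξ) hmem
      obtain ⟨n, hn⟩ := Metric.denseRange_iff.1 hd (ψ ξ) (ε/4) (by linarith)
      obtain ⟨q, hq1, hq2⟩ := exists_rat_btwn (show (ε/4 : ℝ) < ε/2 by linarith)
      refine ⟨(n, q), ⟨lt_trans (by linarith) hq1, ?_⟩, ?_⟩
      · intro y hy
        apply hballU
        have h1 : dist y (d n) ≤ (q : ℝ) := Metric.mem_closedBall.1 hy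
        have h2 : dist (ψ ξ) (d n) < ε/4 := hn
        have h3 : dist y (ψ ξ) ≤ dist y (d n) + dist (d n) (ψ ξ) := dist_triangle _ _ _
        rw [dist_comm (d n) (ψ ξ)] at h3
        exact Metric.mem_ball.2 (by linarith)
      · rw [← dist_eq_norm]; exact le_of_lt (lt_trans hn hq1)
    · rintro ⟨⟨n, q⟩, ⟨hq, hsub⟩, hle⟩
      exact hsub (Metric.mem_closedBall.2 (by rw [dist_eq_norm]; exact hle))
  rw [hcover]
  exact MeasurableSet.biUnion (S.to_countable)
    (fun p hp => hball (d p.1) (p.2 : ℝ) (le_of_lt hp.1))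

/-- Carathéodory-type composition. -/
theorem aux_comp {Ξ V : Type*} [MeasurableSpace Ξ]
    [NormedAddCommGroup V] [InnerProductSpace ℝ V]
    [TopologicalSpace.SeparableSpace V]
    [MeasurableSpace V] [BorelSpace V]
    (B : Ξ → V → ℝ) (K : ℝ)
    (hB : ∀ x : V, Measurable fun ξ => B ξ x)
    (hLip : ∀ ξ, ∀ x y : V, |B ξ x - B ξ y| ≤ K * ‖x - y‖)
    (φ : Ξ → V) (hφ : Measurable φ) :
    Measurable fun ξ => B ξ (φ ξ) := by
  classical
  haveI : SecondCountableTopology V := UniformSpace.secondCountable_of_separable V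
  have hsm := hφ.stronglyMeasurable
  have hsimple : ∀ s : MeasureTheory.SimpleFunc Ξ V, Measurable fun ξ => B ξ (s ξ) := by
    intro s
    have heq : (fun ξ => B ξ (s ξ)) =
        fun ξ => ∑ y ∈ s.range, if s ξ = y then B ξ y else 0 := by
      funext ξ
      rw [Finset.sum_ite_eq s.range (s ξ) (fun y => B ξ y)]
      simp [SimpleFunc.mem_range_self]
    rw [heq]
    refine Finset.measurable_sum _ fun y _ => Measurable.ite ?_ (hB y) measurable_const
    exact s.measurableSet_fiber y
  apply measurable_of_tendsto_metrizable (fun n => hsimple (hsm.approx n))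
  rw [tendsto_pi_nhds]
  intro ξ
  have h1 : Tendsto (fun n => hsm.approx n ξ) atTop (𝓝 (φ ξ)) := hsm.tendsto_approx ξ
  have h2 : Tendsto (fun n => ‖hsm.approx n ξ - φ ξ‖) atTop (𝓝 0) :=
    tendsto_iff_norm_sub_tendsto_zero.1 h1
  rw [tendsto_iff_dist_tendsto_zero]
  refine squeeze_zero (fun n => dist_nonneg) (fun n => ?_) (by simpa using h2.const_mul K)
  rw [Real.dist_eq]
  exact hLip ξ _ _

/-- Separability of `V` from an injective continuous map into separable `H`. -/
theorem aux_sep {V H : Type*} [NormedAddCommGroup V] [InnerProductSpace ℝ V] [CompleteSpace V]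
    [NormedAddCommGroup H] [InnerProductSpace ℝ H] [CompleteSpace H]
    [TopologicalSpace.SeparableSpace H]
    (E : V →L[ℝ] H) (hE : Function.Injective E) :
    TopologicalSpace.SeparableSpace V := by
  set E' : H →L[ℝ] V := ContinuousLinearMap.adjoint E with hE'
  have horth : (LinearMap.range (E' : H →ₗ[ℝ] V))ᗮ = ⊥ := by
    rw [Submodule.eq_bot_iff]
    intro v hv
    have h1 : ∀ h : H, ⟪h, E v⟫ = 0 := by
      intro h
      have h2 := (Submodule.mem_orthogonal _ v).1 hv (E' h) (LinearMap.mem_range_self _ h)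
      rw [hE'] at h2
      rw [← ContinuousLinearMap.adjoint_inner_left E v h]
      exact h2
    have h3 : E v = 0 := by
      have := h1 (E v)
      exact inner_self_eq_zero.1 this
    apply hE
    rw [h3, map_zero]
  have hclos : (LinearMap.range (E' : H →ₗ[ℝ] V)).topologicalClosure = ⊤ := by
    rw [← Submodule.orthogonal_orthogonal_eq_closure, horth, Submodule.bot_orthogonal_eq_top]
  have hdense : DenseRange ⇑E' := by
    have h4 : Dense ((LinearMap.range (E' : H →ₗ[ℝ] V) : Submodule ℝ V) : Set V) := by
      rw [dense_iff_closure_eq, ← Submodule.topologicalClosure_coe, hclos]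
      rfl
    rwa [LinearMap.coe_range, ContinuousLinearMap.coe_coe] at h4
  exact hdense.separableSpace E'.continuous

set_option maxHeartbeats 1000000 in
/-- Measurability of the solution operator of a measurable coercive family. -/
theorem aux_sol {Ξ V : Type*} [MeasurableSpace Ξ]
    [NormedAddCommGroup V] [InnerProductSpace ℝ V] [CompleteSpace V]
    [TopologicalSpace.SeparableSpace V] [MeasurableSpace V] [BorelSpace V]
    (A : Ξ → V →L[ℝ] (V →L[ℝ] ℝ))
    (hAmeas : ∀ x v : V, Measurable fun ξ => A ξ x v)
    (γ L : ℝ) (hγ : 0 < γ) (hγL : γ ≤ L)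
    (hcoerc : ∀ ξ, ∀ x : V, γ * ‖x‖ ^ 2 ≤ A ξ x x)
    (hbound : ∀ ξ, ∀ x : V, ‖A ξ x‖ ≤ L * ‖x‖)
    (w : Ξ → V) (hw : Measurable w)
    (sol : Ξ → V) (hsol : ∀ ξ, ∀ v : V, A ξ (sol ξ) v = ⟪w ξ, v⟫) :
    Measurable sol := by
  haveI : SecondCountableTopology V := UniformSpace.secondCountable_of_separable V
  have hL : (0:ℝ) < L := lt_of_lt_of_le hγ hγL
  set T : Ξ → V → V := fun ξ x => (InnerProductSpace.toDual ℝ V).symm (A ξ x) with hT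
  have hT_inner : ∀ ξ (x v : V), ⟪T ξ x, v⟫ = A ξ x v := by
    intro ξ x v
    exact InnerProductSpace.toDual_symm_apply
  have hT_norm : ∀ ξ (x : V), ‖T ξ x‖ = ‖A ξ x‖ := by
    intro ξ x
    exact LinearIsometryEquiv.norm_map _ _
  set c : ℝ := γ / L ^ 2 with hc
  have hcpos : 0 < c := div_pos hγ (by positivity)
  have harg : 0 ≤ 1 - γ ^ 2 / L ^ 2 := by
    rw [sub_nonneg, div_le_one (by positivity)]
    nlinarith
  set q : ℝ := Real.sqrt (1 - γ ^ 2 / L ^ 2) with hq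
  have hq0 : 0 ≤ q := Real.sqrt_nonneg _
  have hqsq : q ^ 2 = 1 - γ ^ 2 / L ^ 2 := Real.sq_sqrt harg
  have hqlt : q < 1 := by
    have h1 : 1 - γ ^ 2 / L ^ 2 < 1 := by
      have : 0 < γ ^ 2 / L ^ 2 := by positivity
      linarith
    calc q < Real.sqrt 1 := Real.sqrt_lt_sqrt harg h1
    _ = 1 := Real.sqrt_one
  have hcontr : ∀ ξ (x : V), ‖x - c • T ξ x‖ ≤ q * ‖x‖ := by
    intro ξ x
    have h1 : ‖x - c • T ξ x‖ ^ 2 ≤ (1 - γ ^ 2 / L ^ 2) * ‖x‖ ^ 2 := by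
      have e1 : ‖x - c • T ξ x‖ ^ 2 = ‖x‖ ^ 2 - 2 * ⟪x, c • T ξ x⟫ + ‖c • T ξ x‖ ^ 2 :=
        norm_sub_sq_real x _
      have e2 : ⟪x, c • T ξ x⟫ = c * (A ξ x x) := by
        rw [real_inner_smul_right, real_inner_comm, hT_inner]
      have e3 : ‖c • T ξ x‖ = c * ‖A ξ x‖ := by
        rw [norm_smul, Real.norm_eq_abs, abs_of_pos hcpos, hT_norm]
      set a : ℝ := A ξ x x with ha
      set b : ℝ := ‖A ξ x‖ with hb
      set s : ℝ := ‖x‖ with hs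
      have e4 : γ * s ^ 2 ≤ a := hcoerc ξ x
      have e5 : b ≤ L * s := hbound ξ x
      have e6 : (0:ℝ) ≤ b := norm_nonneg _
      have hsn : (0:ℝ) ≤ s := norm_nonneg _
      have hLne : L ≠ 0 := ne_of_gt hL
      rw [e1, e2, e3]
      have hb2 : b ^ 2 ≤ L ^ 2 * s ^ 2 := by nlinarith
      have h8 : (γ / L ^ 2) * b ^ 2 ≤ γ * s ^ 2 := by
        rw [div_mul_eq_mul_div, div_le_iff₀ (by positivity : (0:ℝ) < L ^ 2)]
        nlinarith
      have h7 : (0:ℝ) ≤ 2 * a - γ * s ^ 2 - (γ / L ^ 2) * b ^ 2 := by linarith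
      have hexp : (1 - γ ^ 2 / L ^ 2) * s ^ 2 - (s ^ 2 - 2 * (c * a) + (c * b) ^ 2)
          = (γ / L ^ 2) * (2 * a - γ * s ^ 2 - (γ / L ^ 2) * b ^ 2) := by
        rw [hc]; field_simp; ring
      have h9 : (0:ℝ) ≤ (γ / L ^ 2) * (2 * a - γ * s ^ 2 - (γ / L ^ 2) * b ^ 2) :=
        mul_nonneg (by positivity) h7
      linarith
    have h2 := Real.sqrt_le_sqrt h1
    rw [Real.sqrt_sq (norm_nonneg _)] at h2
    have h3 : Real.sqrt ((1 - γ ^ 2 / L ^ 2) * ‖x‖ ^ 2) = q * ‖x‖ := by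
      rw [Real.sqrt_mul harg, Real.sqrt_sq (norm_nonneg _)]
    rwa [h3] at h2
  -- the iteration
  set ψ : ℕ → Ξ → V := fun n => Nat.rec (motive := fun _ => Ξ → V) (fun _ => (0:V))
    (fun _ ih ξ => ih ξ - c • (T ξ (ih ξ) - w ξ)) n with hψ
  have hψ0 : ψ 0 = fun _ => (0:V) := rfl
  have hψs : ∀ n, ψ (n + 1) = fun ξ => ψ n ξ - c • (T ξ (ψ n ξ) - w ξ) := fun n => rfl
  have hψmeas : ∀ n, Measurable (ψ n) := by
    intro n
    induction n with
    | zero => rw [hψ0]; exact measurable_const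
    | succ n ih =>
      rw [hψs n]
      have hTm : Measurable fun ξ => T ξ (ψ n ξ) := by
        apply aux_pettis
        intro v
        have : (fun ξ => ⟪T ξ (ψ n ξ), v⟫) = fun ξ => A ξ (ψ n ξ) v := by
          funext ξ; exact hT_inner ξ _ v
        rw [this]
        apply aux_comp (fun ξ x => A ξ x v) (L * ‖v‖) (fun x => hAmeas x v) _ _ ih
        intro ξ x y
        have h1 : A ξ x v - A ξ y v = (A ξ (x - y)) v := by
          rw [map_sub]; rfl
        rw [h1, ← Real.norm_eq_abs]
        calc ‖(A ξ (x - y)) v‖ ≤ ‖A ξ (x - y)‖ * ‖v‖ := ContinuousLinearMap.le_opNorm _ _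
        _ ≤ L * ‖x - y‖ * ‖v‖ := by
            apply mul_le_mul_of_nonneg_right (hbound ξ _) (norm_nonneg v)
        _ = L * ‖v‖ * ‖x - y‖ := by ring
      exact ih.sub ((hTm.sub hw).const_smul c)
  have hconv : ∀ ξ, Tendsto (fun n => ψ n ξ) atTop (𝓝 (sol ξ)) := by
    intro ξ
    have hfix : T ξ (sol ξ) = w ξ := by
      refine ext_inner_left ℝ fun v => ?_
      have h1 : ⟪T ξ (sol ξ), v⟫ = ⟪w ξ, v⟫ :=
        (hT_inner ξ (sol ξ) v).trans (hsol ξ v)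
      rw [real_inner_comm (T ξ (sol ξ)) v, real_inner_comm (w ξ) v]
      exact h1
    have hlin : ∀ x y : V, T ξ x - T ξ y = T ξ (x - y) := by
      intro x y
      show (InnerProductSpace.toDual ℝ V).symm (A ξ x) -
          (InnerProductSpace.toDual ℝ V).symm (A ξ y) =
          (InnerProductSpace.toDual ℝ V).symm (A ξ (x - y))
      rw [map_sub (A ξ) x y, map_sub ((InnerProductSpace.toDual ℝ V).symm)]
    have herr : ∀ n, ‖ψ n ξ - sol ξ‖ ≤ q ^ n * ‖sol ξ‖ := by
      intro n
      induction n with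
      | zero => simp [hψ0]
      | succ n ih =>
        have e1 : ψ (n+1) ξ - sol ξ =
            (ψ n ξ - sol ξ) - c • T ξ (ψ n ξ - sol ξ) := by
          rw [show ψ (n+1) ξ = ψ n ξ - c • (T ξ (ψ n ξ) - w ξ) from congrFun (hψs n) ξ]
          rw [← hlin, ← hfix]
          abel
        rw [e1]
        calc ‖(ψ n ξ - sol ξ) - c • T ξ (ψ n ξ - sol ξ)‖ ≤ q * ‖ψ n ξ - sol ξ‖ :=
            hcontr ξ _
        _ ≤ q * (q ^ n * ‖sol ξ‖) := mul_le_mul_of_nonneg_left ih hq0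
        _ = q ^ (n+1) * ‖sol ξ‖ := by ring
    rw [tendsto_iff_dist_tendsto_zero]
    refine squeeze_zero (g := fun n => q ^ n * ‖sol ξ‖) (fun n => dist_nonneg)
      (fun n => (dist_eq_norm _ _).trans_le (herr n)) ?_
    simpa using (tendsto_pow_atTop_nhds_zero_of_lt_one hq0 hqlt).mul_const ‖sol ξ‖
  exact measurable_of_tendsto_metrizable hψmeas (tendsto_pi_nhds.2 hconv)

/-- Parallelogram-type identity for convex combinations. -/
theorem aux_normsq {W : Type*} [NormedAddCommGroup W] [InnerProductSpace ℝ W]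
    (x y : W) (a b : ℝ) (hab : a + b = 1) :
    ‖a • x + b • y‖ ^ 2 = a * ‖x‖ ^ 2 + b * ‖y‖ ^ 2 - a * b * ‖x - y‖ ^ 2 := by
  have hb : b = 1 - a := by linarith
  subst hb
  have e1 := norm_add_sq_real (a • x) ((1 - a) • y)
  have e2 : ⟪a • x, (1 - a) • y⟫ = a * (1 - a) * ⟪x, y⟫ := by
    rw [real_inner_smul_left, real_inner_smul_right]; ring
  have e3 : ‖a • x‖ ^ 2 = a ^ 2 * ‖x‖ ^ 2 := by
    rw [norm_smul, Real.norm_eq_abs, mul_pow, sq_abs]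
  have e4 : ‖(1 - a) • y‖ ^ 2 = (1 - a) ^ 2 * ‖y‖ ^ 2 := by
    rw [norm_smul, Real.norm_eq_abs, mul_pow, sq_abs]
  have e5 := norm_sub_sq_real x y
  rw [e1, e2, e3, e4, e5]
  ring

set_option maxHeartbeats 1000000 in
/-- `(α/8)·‖z(Q) - z(P)‖ ≤ sup_{z ∈ Z_ad} ‖F'_P(z) - F'_Q(z)‖`. -/
theorem statement8
    {V H : Type*} [NormedAddCommGroup V] [InnerProductSpace ℝ V] [CompleteSpace V]
    [NormedAddCommGroup H] [InnerProductSpace ℝ H] [CompleteSpace H]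
    [TopologicalSpace.SeparableSpace H] [MeasurableSpace H] [BorelSpace H]
    {Ξ : Type*} [MetricSpace Ξ] [MeasurableSpace Ξ] [BorelSpace Ξ]
    (E : V →L[ℝ] H) (hE : Function.Injective E)
    (A : Ξ → V →L[ℝ] (V →L[ℝ] ℝ))
    (hAmeas : ∀ u v : V, Measurable fun ξ => A ξ u v)
    (γ L : ℝ) (hγ : 0 < γ) (hγL : γ ≤ L)
    (hcoerc : ∀ ξ, ∀ u : V, γ * ‖u‖ ^ 2 ≤ A ξ u u)
    (hbound : ∀ ξ, ∀ u : V, ‖A ξ u‖ ≤ L * ‖u‖)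
    (g : Ξ → H) (hgmeas : Measurable g) (Cg : ℝ) (hgb : ∀ ξ, ‖g ξ‖ ≤ Cg)
    (Zad : Set H) (hZne : Zad.Nonempty) (hZcl : IsClosed Zad)
    (hZbd : Bornology.IsBounded Zad) (hZcvx : Convex ℝ Zad)
    (α : ℝ) (hα : 0 < α) (ut : H)
    (u : H → Ξ → V)
    (hu : ∀ z ξ, ∀ v : V, A ξ (u z ξ) v = ⟪z + g ξ, E v⟫)
    (f : H → Ξ → ℝ)
    (hf : ∀ z ξ, f z ξ = (1 / 2) * ‖E (u z ξ) - ut‖ ^ 2 + (α / 2) * ‖z‖ ^ 2)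
    (P Q : Measure Ξ) [IsProbabilityMeasure P] [IsProbabilityMeasure Q]
    (FP FQ : H → ℝ) (hFP : ∀ z, FP z = ∫ ξ, f z ξ ∂P) (hFQ : ∀ z, FQ z = ∫ ξ, f z ξ ∂Q)
    (F'P F'Q : H → (H →L[ℝ] ℝ))
    (hF'P : ∀ z h : H, Tendsto (fun t : ℝ => (FP (z + t • h) - FP z) / t)
      (𝓝[≠] (0 : ℝ)) (𝓝 (F'P z h)))
    (hF'Q : ∀ z h : H, Tendsto (fun t : ℝ => (FQ (z + t • h) - FQ z) / t)
      (𝓝[≠] (0 : ℝ)) (𝓝 (F'Q z h)))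
    (zP zQ : H)
    (hzP : zP ∈ Zad ∧ ∀ z ∈ Zad, FP zP ≤ FP z)
    (hzQ : zQ ∈ Zad ∧ ∀ z ∈ Zad, FQ zQ ≤ FQ z) :
    (α / 8) * ‖zQ - zP‖ ≤ sSup ((fun z => ‖F'P z - F'Q z‖) '' Zad) := by
  classical
  -- basic facts
  have hΞne : Nonempty Ξ := by
    by_contra hne
    have h0 : (Set.univ : Set Ξ) = ∅ := Set.univ_eq_empty_iff.2 (not_nonempty_iff.mp hne)
    have h1 := measure_univ (μ := P)
    rw [h0, measure_empty] at h1
    exact one_ne_zero h1.symm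
  obtain ⟨ξ₀⟩ := hΞne
  have hCg0 : 0 ≤ Cg := le_trans (norm_nonneg _) (hgb ξ₀)
  have hL : (0:ℝ) < L := lt_of_lt_of_le hγ hγL
  haveI hVsep : TopologicalSpace.SeparableSpace V := aux_sep E hE
  letI mV : MeasurableSpace V := borel V
  haveI : BorelSpace V := ⟨rfl⟩
  haveI : SecondCountableTopology H := UniformSpace.secondCountable_of_separable H
  -- measurability of the solution map
  have hmeasu : ∀ z : H, Measurable fun ξ => u z ξ := by
    intro z
    apply aux_sol A hAmeas γ L hγ hγL hcoerc hbound
      (fun ξ => ContinuousLinearMap.adjoint E (z + g ξ))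
    · exact (ContinuousLinearMap.adjoint E).continuous.measurable.comp
        (measurable_const.add hgmeas)
    · intro ξ v
      rw [hu z ξ v, ← ContinuousLinearMap.adjoint_inner_left E v (z + g ξ)]
  have hfmeas : ∀ z : H, Measurable fun ξ => f z ξ := by
    intro z
    have h1 : Measurable fun ξ => ‖E (u z ξ) - ut‖ :=
      ((E.continuous.measurable.comp (hmeasu z)).sub measurable_const).norm
    have h2 : (fun ξ => f z ξ)
        = fun ξ => (1 / 2) * ‖E (u z ξ) - ut‖ ^ 2 + (α / 2) * ‖z‖ ^ 2 := by
      funext ξ; exact hf z ξ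
    rw [h2]
    exact (((h1.pow_const 2).const_mul (1/2)).add_const _)
  -- a-priori bound on solutions
  have hubound : ∀ (z : H) ξ, ‖u z ξ‖ ≤ ‖E‖ * (‖z‖ + Cg) / γ := by
    intro z ξ
    have h1 : γ * ‖u z ξ‖ ^ 2 ≤ A ξ (u z ξ) (u z ξ) := hcoerc ξ (u z ξ)
    rw [hu z ξ (u z ξ)] at h1
    have h2 : ⟪z + g ξ, E (u z ξ)⟫ ≤ ‖z + g ξ‖ * ‖E (u z ξ)‖ := real_inner_le_norm _ _
    have h3 : ‖E (u z ξ)‖ ≤ ‖E‖ * ‖u z ξ‖ := E.le_opNorm _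
    have h4 : ‖z + g ξ‖ ≤ ‖z‖ + Cg := le_trans (norm_add_le _ _) (by linarith [hgb ξ])
    have h5 : γ * ‖u z ξ‖ ^ 2 ≤ (‖z‖ + Cg) * (‖E‖ * ‖u z ξ‖) := by
      calc γ * ‖u z ξ‖ ^ 2 ≤ ‖z + g ξ‖ * ‖E (u z ξ)‖ := le_trans h1 h2
      _ ≤ (‖z‖ + Cg) * (‖E‖ * ‖u z ξ‖) := by
          apply mul_le_mul h4 h3 (norm_nonneg _) (by positivity)
    rw [le_div_iff₀ hγ]
    rcases eq_or_lt_of_le (norm_nonneg (u z ξ)) with h0 | h0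
    · rw [← h0, zero_mul]
      exact mul_nonneg (norm_nonneg _) (by linarith [norm_nonneg z])
    · nlinarith [norm_nonneg z, norm_nonneg E]
  have hf0 : ∀ (z : H) ξ, 0 ≤ f z ξ := by
    intro z ξ; rw [hf z ξ]; positivity
  -- bound on f for bounded z
  obtain ⟨R, hR⟩ := isBounded_iff_forall_norm_le.1 hZbd
  obtain ⟨z₀, hz₀⟩ := hZne
  have hR0 : 0 ≤ R := le_trans (norm_nonneg z₀) (hR z₀ hz₀)
  set B : ℝ := (1/2) * (‖E‖ * (‖E‖ * (R + 1 + Cg) / γ) + ‖ut‖) ^ 2 + (α/2) * (R+1)^2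
    with hBdef
  have hB0 : 0 ≤ B := by
    apply add_nonneg (by positivity)
    exact mul_nonneg (by linarith) (sq_nonneg _)
  have hfleB : ∀ z : H, ‖z‖ ≤ R + 1 → ∀ ξ, f z ξ ≤ B := by
    intro z hz ξ
    have h1 : ‖E (u z ξ) - ut‖ ≤ ‖E‖ * (‖E‖ * (R + 1 + Cg) / γ) + ‖ut‖ := by
      have h2 : ‖E (u z ξ)‖ ≤ ‖E‖ * ‖u z ξ‖ := E.le_opNorm _
      have h3 := hubound z ξ
      have h4 : ‖E‖ * (‖z‖ + Cg) / γ ≤ ‖E‖ * (R + 1 + Cg) / γ := by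
        gcongr
      calc ‖E (u z ξ) - ut‖ ≤ ‖E (u z ξ)‖ + ‖ut‖ := norm_sub_le _ _
      _ ≤ ‖E‖ * (‖E‖ * (R + 1 + Cg) / γ) + ‖ut‖ := by
          have h5 : ‖E (u z ξ)‖ ≤ ‖E‖ * (‖E‖ * (R + 1 + Cg) / γ) := by
            calc ‖E (u z ξ)‖ ≤ ‖E‖ * ‖u z ξ‖ := h2
            _ ≤ ‖E‖ * (‖E‖ * (R + 1 + Cg) / γ) := by
                apply mul_le_mul_of_nonneg_left _ (norm_nonneg E)
                exact le_trans h3 h4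
          linarith
    rw [hf z ξ, hBdef]
    have h6 : ‖E (u z ξ) - ut‖ ^ 2 ≤ (‖E‖ * (‖E‖ * (R + 1 + Cg) / γ) + ‖ut‖) ^ 2 := by
      nlinarith [norm_nonneg (E (u z ξ) - ut)]
    have h7 : ‖z‖ ^ 2 ≤ (R+1)^2 := by nlinarith [norm_nonneg z]
    nlinarith
  -- integrability
  have hint : ∀ (μ : Measure Ξ), IsProbabilityMeasure μ → ∀ z : H,
      Integrable (f z) μ := by
    intro μ hμ z
    haveI := hμ
    have hbd : ∀ ξ, ‖f z ξ‖ ≤ (1/2) * (‖E‖ * (‖E‖ * (‖z‖ + Cg) / γ) + ‖ut‖) ^ 2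
        + (α/2) * ‖z‖^2 := by
      intro ξ
      rw [Real.norm_eq_abs, abs_of_nonneg (hf0 z ξ), hf z ξ]
      have h2 : ‖E (u z ξ) - ut‖ ≤ ‖E‖ * (‖E‖ * (‖z‖ + Cg) / γ) + ‖ut‖ := by
        calc ‖E (u z ξ) - ut‖ ≤ ‖E (u z ξ)‖ + ‖ut‖ := norm_sub_le _ _
        _ ≤ ‖E‖ * (‖E‖ * (‖z‖ + Cg) / γ) + ‖ut‖ := by
            have ha1 := E.le_opNorm (u z ξ)
            have ha2 := mul_le_mul_of_nonneg_left (hubound z ξ) (norm_nonneg E)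
            linarith
      nlinarith [norm_nonneg (E (u z ξ) - ut)]
    exact (integrable_const _).mono' (hfmeas z).aestronglyMeasurable
      (Filter.Eventually.of_forall hbd)
  -- affine dependence of solutions
  have hAinj : ∀ ξ (x y : V), (∀ v, A ξ x v = A ξ y v) → x = y := by
    intro ξ x y hxy
    have h1 := hcoerc ξ (x - y)
    have h4 : A ξ (x - y) = A ξ x - A ξ y := _root_.map_sub (A ξ) x y
    have h2 : (A ξ x - A ξ y) (x - y) = A ξ x (x - y) - A ξ y (x - y) :=
      ContinuousLinearMap.sub_apply _ _ _
    rw [h4, h2, hxy (x - y), sub_self] at h1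
    have h5 : ‖x - y‖ ^ 2 ≤ 0 := by nlinarith
    have h6 : ‖x - y‖ ^ 2 = 0 := le_antisymm h5 (sq_nonneg _)
    have h3 : ‖x - y‖ = 0 := (pow_eq_zero_iff (two_ne_zero)).1 h6
    exact sub_eq_zero.1 (norm_eq_zero.1 h3)
  have hukey : ∀ (z1 z2 : H) (a b : ℝ), a + b = 1 → ∀ ξ,
      u (a • z1 + b • z2) ξ = a • u z1 ξ + b • u z2 ξ := by
    intro z1 z2 a b hab ξ
    apply hAinj ξ
    intro v
    have hrhs : A ξ (a • u z1 ξ + b • u z2 ξ) v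
        = a * (A ξ (u z1 ξ) v) + b * (A ξ (u z2 ξ) v) := by
      rw [_root_.map_add (A ξ), _root_.map_smul (A ξ), _root_.map_smul (A ξ),
        ContinuousLinearMap.add_apply, ContinuousLinearMap.smul_apply,
        ContinuousLinearMap.smul_apply, smul_eq_mul, smul_eq_mul]
    rw [hrhs, hu (a • z1 + b • z2) ξ v, hu z1 ξ v, hu z2 ξ v]
    have hz : a • z1 + b • z2 + g ξ = a • (z1 + g ξ) + b • (z2 + g ξ) := by
      calc a • z1 + b • z2 + g ξ = a • z1 + b • z2 + (a + b) • g ξ := by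
            rw [hab, one_smul]
      _ = a • (z1 + g ξ) + b • (z2 + g ξ) := by
            rw [add_smul, smul_add, smul_add]; abel
    rw [hz, inner_add_left, real_inner_smul_left, real_inner_smul_left]
  -- pointwise strong convexity
  have hfconv : ∀ (z1 z2 : H) (a b : ℝ), 0 ≤ a → 0 ≤ b → a + b = 1 → ∀ ξ,
      f (a • z1 + b • z2) ξ ≤ a * f z1 ξ + b * f z2 ξ - (α/2) * a * b * ‖z1 - z2‖^2 := by
    intro z1 z2 a b ha hb hab ξ
    have hX : E (u (a • z1 + b • z2) ξ) - ut
        = a • (E (u z1 ξ) - ut) + b • (E (u z2 ξ) - ut) := by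
      rw [hukey z1 z2 a b hab ξ, _root_.map_add E, _root_.map_smul E,
        _root_.map_smul E]
      have h1 : a • (E (u z1 ξ) - ut) + b • (E (u z2 ξ) - ut)
          = a • E (u z1 ξ) + b • E (u z2 ξ) - (a + b) • ut := by
        rw [smul_sub, smul_sub, add_smul]; abel
      rw [h1, hab, one_smul]
    have h1 : ‖E (u (a • z1 + b • z2) ξ) - ut‖^2
        = a * ‖E (u z1 ξ) - ut‖^2 + b * ‖E (u z2 ξ) - ut‖^2
          - a * b * ‖(E (u z1 ξ) - ut) - (E (u z2 ξ) - ut)‖^2 := by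
      rw [hX]; exact aux_normsq _ _ a b hab
    have h2 : ‖a • z1 + b • z2‖^2 = a * ‖z1‖^2 + b * ‖z2‖^2 - a * b * ‖z1 - z2‖^2 :=
      aux_normsq z1 z2 a b hab
    rw [hf (a • z1 + b • z2) ξ, hf z1 ξ, hf z2 ξ, h1, h2]
    have h3 : 0 ≤ a * b * ‖(E (u z1 ξ) - ut) - (E (u z2 ξ) - ut)‖^2 :=
      mul_nonneg (mul_nonneg ha hb) (sq_nonneg _)
    nlinarith
  -- strong convexity of the integral functionals
  have hconvF : ∀ (μ : Measure Ξ), IsProbabilityMeasure μ → ∀ (F : H → ℝ),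
      (∀ z, F z = ∫ ξ, f z ξ ∂μ) → ∀ (z1 z2 : H) (a b : ℝ), 0 ≤ a → 0 ≤ b → a + b = 1 →
      F (a • z1 + b • z2) ≤ a * F z1 + b * F z2 - (α/2) * a * b * ‖z1 - z2‖^2 := by
    intro μ hμ F hFrep z1 z2 a b ha hb hab
    haveI := hμ
    have hι1 := hint μ hμ z1
    have hι2 := hint μ hμ z2
    have hιc := hint μ hμ (a • z1 + b • z2)
    rw [hFrep, hFrep, hFrep]
    have step1 : ∫ ξ, f (a • z1 + b • z2) ξ ∂μ
        ≤ ∫ ξ, (a * f z1 ξ + b * f z2 ξ - (α/2) * a * b * ‖z1 - z2‖^2) ∂μ := by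
      apply integral_mono hιc
      · exact ((hι1.const_mul a).add (hι2.const_mul b)).sub (integrable_const _)
      · exact fun ξ => hfconv z1 z2 a b ha hb hab ξ
    have step2 : ∫ ξ, (a * f z1 ξ + b * f z2 ξ - (α/2) * a * b * ‖z1 - z2‖^2) ∂μ
        = a * ∫ ξ, f z1 ξ ∂μ + b * ∫ ξ, f z2 ξ ∂μ - (α/2) * a * b * ‖z1 - z2‖^2 := by
      have hint1 : Integrable (fun ξ => a * f z1 ξ + b * f z2 ξ) μ :=
        (hι1.const_mul a).add (hι2.const_mul b)
      rw [integral_sub hint1 (integrable_const _),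
        integral_add (hι1.const_mul a) (hι2.const_mul b),
        integral_const_mul, integral_const_mul, integral_const]
      simp [measure_univ]
    linarith [step1, step2.le, step2.ge]
  -- nonnegativity and boundedness of the functionals
  have hF0 : ∀ (μ : Measure Ξ) (F : H → ℝ), (∀ z, F z = ∫ ξ, f z ξ ∂μ) →
      ∀ z, 0 ≤ F z := by
    intro μ F hFrep z
    rw [hFrep]
    exact integral_nonneg (fun ξ => hf0 z ξ)
  have hFB : ∀ (μ : Measure Ξ), IsProbabilityMeasure μ → ∀ (F : H → ℝ),
      (∀ z, F z = ∫ ξ, f z ξ ∂μ) → ∀ z, ‖z‖ ≤ R + 1 → F z ≤ B := by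
    intro μ hμ F hFrep z hz
    haveI := hμ
    rw [hFrep]
    calc ∫ ξ, f z ξ ∂μ ≤ ∫ _ξ, B ∂μ :=
        integral_mono (hint μ hμ z) (integrable_const _) (fun ξ => hfleB z hz ξ)
    _ = B := by simp [measure_univ]
  -- key gradient inequality from convexity
  have hkey : ∀ (F : H → ℝ) (F' : H → H →L[ℝ] ℝ),
      (∀ (z1 z2 : H) (a b : ℝ), 0 ≤ a → 0 ≤ b → a + b = 1 →
        F (a • z1 + b • z2) ≤ a * F z1 + b * F z2 - (α/2) * a * b * ‖z1 - z2‖^2) →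
      (∀ z h : H, Tendsto (fun t : ℝ => (F (z + t • h) - F z) / t)
        (𝓝[≠] (0 : ℝ)) (𝓝 (F' z h))) →
      ∀ z h : H, F' z h ≤ F (z + h) - F z - (α/2) * ‖h‖^2 := by
    intro F F' hcv htd z h
    have hlim1 : Tendsto (fun t : ℝ => (F (z + t • h) - F z) / t)
        (𝓝[>] (0:ℝ)) (𝓝 (F' z h)) :=
      (htd z h).mono_left (nhdsWithin_mono _
        (fun t ht => Set.mem_compl_singleton_iff.2 (ne_of_gt ht)))
    have hlim2 : Tendsto (fun t : ℝ => F (z + h) - F z - (α/2) * (1 - t) * ‖h‖^2)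
        (𝓝[>] (0:ℝ)) (𝓝 (F (z + h) - F z - (α/2) * ‖h‖^2)) := by
      have hc : Continuous fun t : ℝ => F (z + h) - F z - (α/2) * (1 - t) * ‖h‖^2 :=
        continuous_const.sub
          ((continuous_const.mul (continuous_const.sub continuous_id)).mul continuous_const)
      have h0 : F (z + h) - F z - (α/2) * (1 - (0:ℝ)) * ‖h‖^2
          = F (z + h) - F z - (α/2) * ‖h‖^2 := by ring
      rw [← h0]
      exact (hc.tendsto 0).mono_left nhdsWithin_le_nhds
    refine le_of_tendsto_of_tendsto hlim1 hlim2 ?_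
    filter_upwards [Ioo_mem_nhdsGT_of_mem (Set.left_mem_Ico.2 one_pos)] with t ht
    have ht0 : 0 < t := ht.1
    have ht1 : t < 1 := ht.2
    have hcombo : (1 - t) • z + t • (z + h) = z + t • h := by
      rw [smul_add, sub_smul, one_smul]; abel
    have h2 := hcv z (z + h) (1 - t) t (by linarith) (le_of_lt ht0) (by ring)
    rw [hcombo] at h2
    have hnorm : ‖z - (z + h)‖ = ‖h‖ := by
      rw [show z - (z + h) = -h by abel, norm_neg]
    rw [hnorm] at h2
    rw [div_le_iff₀ ht0]
    nlinarith [h2]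
  -- operator norm bound for the derivatives
  have hnormF' : ∀ (F : H → ℝ) (F' : H → H →L[ℝ] ℝ),
      (∀ z h : H, F' z h ≤ F (z + h) - F z - (α/2) * ‖h‖^2) →
      (∀ z, 0 ≤ F z) → (∀ z, ‖z‖ ≤ R + 1 → F z ≤ B) →
      ∀ z ∈ Zad, ‖F' z‖ ≤ B := by
    intro F F' hk h0 hb z hz
    apply ContinuousLinearMap.opNorm_le_of_unit_norm hB0
    intro h hh1
    have hαh : 0 ≤ (α/2) * ‖h‖^2 := mul_nonneg (by linarith) (sq_nonneg _)
    have hz1 : ‖z + h‖ ≤ R + 1 := by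
      calc ‖z + h‖ ≤ ‖z‖ + ‖h‖ := norm_add_le _ _
      _ ≤ R + 1 := by rw [hh1]; linarith [hR z hz]
    have hz2 : ‖z + -h‖ ≤ R + 1 := by
      calc ‖z + -h‖ ≤ ‖z‖ + ‖-h‖ := norm_add_le _ _
      _ ≤ R + 1 := by rw [norm_neg, hh1]; linarith [hR z hz]
    have e1 : F' z h ≤ B := by
      have := hk z h
      have := hb (z + h) hz1
      have := h0 z
      linarith
    have e2 : -(F' z h) ≤ B := by
      have hk2 := hk z (-h)
      rw [map_neg] at hk2
      have := hb (z + -h) hz2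
      have := h0 z
      have hnn : ‖(-h : H)‖ = ‖h‖ := norm_neg _
      rw [hnn] at hk2
      linarith
    rw [Real.norm_eq_abs]
    exact abs_le.2 ⟨by linarith, e1⟩
  have hkeyP := hkey FP F'P (hconvF P inferInstance FP hFP) hF'P
  have hkeyQ := hkey FQ F'Q (hconvF Q inferInstance FQ hFQ) hF'Q
  have hnP : ∀ z ∈ Zad, ‖F'P z‖ ≤ B :=
    hnormF' FP F'P hkeyP (hF0 P FP hFP) (hFB P inferInstance FP hFP)
  have hnQ : ∀ z ∈ Zad, ‖F'Q z‖ ≤ B :=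
    hnormF' FQ F'Q hkeyQ (hF0 Q FQ hFQ) (hFB Q inferInstance FQ hFQ)
  -- the image set and its sup
  set S : Set ℝ := (fun z => ‖F'P z - F'Q z‖) '' Zad with hSdef
  have hbdd : BddAbove S := by
    refine ⟨2 * B, ?_⟩
    rintro y ⟨z, hz, rfl⟩
    calc ‖F'P z - F'Q z‖ ≤ ‖F'P z‖ + ‖F'Q z‖ := norm_sub_le _ _
    _ ≤ 2 * B := by linarith [hnP z hz, hnQ z hz]
  have hmem : ‖F'P zQ - F'Q zQ‖ ∈ S := ⟨zQ, hzQ.1, rfl⟩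
  have hsup : ‖F'P zQ - F'Q zQ‖ ≤ sSup S := le_csSup hbdd hmem
  have hS0 : 0 ≤ sSup S := le_trans (norm_nonneg _) hsup
  -- variational inequalities
  have hvar : ∀ (F : H → ℝ) (F' : H → H →L[ℝ] ℝ),
      (∀ z h : H, Tendsto (fun t : ℝ => (F (z + t • h) - F z) / t)
        (𝓝[≠] (0 : ℝ)) (𝓝 (F' z h))) →
      ∀ z1, z1 ∈ Zad → (∀ z ∈ Zad, F z1 ≤ F z) → ∀ z2, z2 ∈ Zad →
      0 ≤ F' z1 (z2 - z1) := by
    intro F F' htd z1 hz1 hmin z2 hz2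
    have hlim : Tendsto (fun t : ℝ => (F (z1 + t • (z2 - z1)) - F z1) / t)
        (𝓝[>] (0:ℝ)) (𝓝 (F' z1 (z2 - z1))) :=
      (htd z1 (z2 - z1)).mono_left (nhdsWithin_mono _
        (fun t ht => Set.mem_compl_singleton_iff.2 (ne_of_gt ht)))
    refine ge_of_tendsto hlim ?_
    filter_upwards [Ioo_mem_nhdsGT_of_mem (Set.left_mem_Ico.2 one_pos)] with t ht
    have hmemZ : z1 + t • (z2 - z1) ∈ Zad := by
      have hc := hZcvx hz1 hz2 (by linarith [ht.2] : (0:ℝ) ≤ 1 - t) (le_of_lt ht.1)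
        (by ring)
      have he : (1 - t) • z1 + t • z2 = z1 + t • (z2 - z1) := by
        rw [smul_sub, sub_smul, one_smul]; abel
      rwa [he] at hc
    exact div_nonneg (by linarith [hmin _ hmemZ]) (le_of_lt ht.1)
  have hvarP : 0 ≤ F'P zP (zQ - zP) := hvar FP F'P hF'P zP hzP.1 hzP.2 zQ hzQ.1
  have hvarQ : 0 ≤ F'Q zQ (zP - zQ) := hvar FQ F'Q hF'Q zQ hzQ.1 hzQ.2 zP hzP.1
  -- strong monotonicity estimate
  have hd : α * ‖zQ - zP‖^2 ≤ (F'P zQ - F'Q zQ) (zQ - zP) := by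
    have k1 := hkeyP zP (zQ - zP)
    rw [show zP + (zQ - zP) = zQ by abel] at k1
    have k2 := hkeyP zQ (zP - zQ)
    rw [show zQ + (zP - zQ) = zP by abel] at k2
    have k3 : F'P zQ (zP - zQ) = -(F'P zQ (zQ - zP)) := by
      rw [show zP - zQ = -(zQ - zP) by abel, map_neg]
    have k4 : ‖zP - zQ‖ = ‖zQ - zP‖ := norm_sub_rev _ _
    rw [k3, k4] at k2
    have k5 : F'Q zQ (zP - zQ) = -(F'Q zQ (zQ - zP)) := by
      rw [show zP - zQ = -(zQ - zP) by abel, map_neg]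
    rw [k5] at hvarQ
    have k6 : (F'P zQ - F'Q zQ) (zQ - zP) = F'P zQ (zQ - zP) - F'Q zQ (zQ - zP) :=
      ContinuousLinearMap.sub_apply _ _ _
    rw [k6]
    linarith
  have hop : (F'P zQ - F'Q zQ) (zQ - zP) ≤ ‖F'P zQ - F'Q zQ‖ * ‖zQ - zP‖ := by
    calc (F'P zQ - F'Q zQ) (zQ - zP) ≤ |(F'P zQ - F'Q zQ) (zQ - zP)| := le_abs_self _
    _ = ‖(F'P zQ - F'Q zQ) (zQ - zP)‖ := (Real.norm_eq_abs _).symm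
    _ ≤ ‖F'P zQ - F'Q zQ‖ * ‖zQ - zP‖ := ContinuousLinearMap.le_opNorm _ _
  have hfinal : α * ‖zQ - zP‖^2 ≤ sSup S * ‖zQ - zP‖ := by
    calc α * ‖zQ - zP‖^2 ≤ (F'P zQ - F'Q zQ) (zQ - zP) := hd
    _ ≤ ‖F'P zQ - F'Q zQ‖ * ‖zQ - zP‖ := hop
    _ ≤ sSup S * ‖zQ - zP‖ := mul_le_mul_of_nonneg_right hsup (norm_nonneg _)
  rcases eq_or_lt_of_le (norm_nonneg (zQ - zP)) with h0 | h0
  · rw [← h0, mul_zero]; exact hS0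
  · have h1 : α * ‖zQ - zP‖ ≤ sSup S := by
      have h2 : (α * ‖zQ - zP‖) * ‖zQ - zP‖ ≤ sSup S * ‖zQ - zP‖ := by
        nlinarith [hfinal]
      exact le_of_mul_le_mul_right h2 h0
    nlinarith [mul_nonneg hα.le (norm_nonneg (zQ - zP))]
end

section
/- Assume Ξ is additionally separable and that there is a constant C₀ such that ‖A(ξ) − A(ξ')‖_{L(V,V*)} ≤ C₀ d(ξ,ξ') and ‖g(ξ) − g(ξ')‖_H ≤ C₀ d(ξ,ξ') for all ξ, ξ' ∈ Ξ. Then the sequences of empirical optimal values and empirical solutions converge ℙ-almost surely to the true ones: for ℙ-almost every ω, v(P_n(ω)) → v(P) and ‖z(P_n(ω)) − z(P)‖_H → 0 as n → ∞. -/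
open MeasureTheory Filter Topology
open scoped RealInnerProductSpace ENNReal

private lemma aux_le_div {γ C x : ℝ} (hγ : 0 < γ) (hC : 0 ≤ C) (hx : 0 ≤ x)
    (h : γ * x ^ 2 ≤ C * x) : x ≤ C / γ := by
  rcases hx.eq_or_lt with h0 | h0
  · rw [← h0]; positivity
  · rw [le_div_iff₀ hγ]
    have : γ * x ^ 2 = (γ * x) * x := by ring
    rw [this] at h
    have := le_of_mul_le_mul_right h h0
    linarith

private lemma aux_sq_diff {H : Type*} [SeminormedAddCommGroup H] {a b : H} {M : ℝ}
    (ha : ‖a‖ ≤ M) (hb : ‖b‖ ≤ M) : |‖a‖ ^ 2 - ‖b‖ ^ 2| ≤ 2 * M * ‖a - b‖ := by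
  have h1 : |‖a‖ - ‖b‖| ≤ ‖a - b‖ := abs_norm_sub_norm_le a b
  have h2 : |‖a‖ + ‖b‖| ≤ 2 * M := by
    rw [abs_of_nonneg (by positivity)]; linarith
  calc |‖a‖ ^ 2 - ‖b‖ ^ 2| = |‖a‖ - ‖b‖| * |‖a‖ + ‖b‖| := by
        rw [← abs_mul]; ring_nf
      _ ≤ ‖a - b‖ * (2 * M) := by
        apply mul_le_mul h1 h2 (abs_nonneg _) (norm_nonneg _)
      _ = 2 * M * ‖a - b‖ := by ring

private lemma aux_sInf_half {X : Type*} {s : Set X} (hs : s.Nonempty) (h1 h2 : X → ℝ)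
    (h1nn : ∀ x ∈ s, 0 ≤ h1 x) {ε : ℝ}
    (hε : ∀ x ∈ s, h1 x ≤ h2 x + ε) :
    sInf (h1 '' s) ≤ sInf (h2 '' s) + ε := by
  have hbd1 : BddBelow (h1 '' s) := ⟨0, by rintro y ⟨x, hx, rfl⟩; exact h1nn x hx⟩
  rw [← sub_le_iff_le_add]
  apply le_csInf (hs.image _)
  rintro y ⟨x, hx, rfl⟩
  rw [sub_le_iff_le_add]
  exact le_trans (csInf_le hbd1 ⟨x, hx, rfl⟩) (hε x hx)

private lemma aux_sInf {X : Type*} {s : Set X} (hs : s.Nonempty) (h1 h2 : X → ℝ)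
    (h1nn : ∀ x ∈ s, 0 ≤ h1 x) (h2nn : ∀ x ∈ s, 0 ≤ h2 x) {ε : ℝ}
    (hε : ∀ x ∈ s, |h1 x - h2 x| ≤ ε) :
    |sInf (h1 '' s) - sInf (h2 '' s)| ≤ ε := by
  rw [abs_le]
  constructor
  · have := aux_sInf_half hs h2 h1 h2nn (fun x hx => by linarith [(abs_le.mp (hε x hx)).1])
    linarith
  · have := aux_sInf_half hs h1 h2 h1nn (fun x hx => by linarith [(abs_le.mp (hε x hx)).2])
    linarith

set_option maxHeartbeats 2000000 in
/-- Almost-sure convergence of empirical optimal values and solutions. -/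
theorem statement10
    {V H : Type*} [NormedAddCommGroup V] [InnerProductSpace ℝ V] [CompleteSpace V]
    [NormedAddCommGroup H] [InnerProductSpace ℝ H] [CompleteSpace H]
    [TopologicalSpace.SeparableSpace H] [MeasurableSpace H] [BorelSpace H]
    {Ξ : Type*} [MetricSpace Ξ] [TopologicalSpace.SeparableSpace Ξ]
    [MeasurableSpace Ξ] [BorelSpace Ξ]
    (E : V →L[ℝ] H) (hE : Function.Injective E)
    (A : Ξ → V →L[ℝ] (V →L[ℝ] ℝ))
    (hAmeas : ∀ u v : V, Measurable fun ξ => A ξ u v)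
    (γ L : ℝ) (hγ : 0 < γ) (hγL : γ ≤ L)
    (hcoerc : ∀ ξ, ∀ u : V, γ * ‖u‖ ^ 2 ≤ A ξ u u)
    (hbound : ∀ ξ, ∀ u : V, ‖A ξ u‖ ≤ L * ‖u‖)
    (g : Ξ → H) (hgmeas : Measurable g) (Cg : ℝ) (hgb : ∀ ξ, ‖g ξ‖ ≤ Cg)
    (Zad : Set H) (hZne : Zad.Nonempty) (hZcl : IsClosed Zad)
    (hZbd : Bornology.IsBounded Zad) (hZcvx : Convex ℝ Zad)
    (α : ℝ) (hα : 0 < α) (ut : H)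
    (u : H → Ξ → V)
    (hu : ∀ z ξ, ∀ v : V, A ξ (u z ξ) v = ⟪z + g ξ, E v⟫)
    (f : H → Ξ → ℝ)
    (hf : ∀ z ξ, f z ξ = (1 / 2) * ‖E (u z ξ) - ut‖ ^ 2 + (α / 2) * ‖z‖ ^ 2)
    (C₀ : ℝ) (hALip : ∀ ξ ξ' : Ξ, ‖A ξ - A ξ'‖ ≤ C₀ * dist ξ ξ')
    (hgLip : ∀ ξ ξ' : Ξ, ‖g ξ - g ξ'‖ ≤ C₀ * dist ξ ξ')
    {Ω : Type*} [MeasurableSpace Ω] (ℙ : Measure Ω) [IsProbabilityMeasure ℙ]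
    (P : Measure Ξ) [IsProbabilityMeasure P]
    (ξs : ℕ → Ω → Ξ) (hξmeas : ∀ i, Measurable (ξs i))
    (hindep : ProbabilityTheory.iIndepFun ξs ℙ)
    (hdist : ∀ i, Measure.map (ξs i) ℙ = P)
    (Pemp : ℕ → Ω → Measure Ξ)
    (hPemp : ∀ n ω, Pemp n ω =
      (n : ℝ≥0∞)⁻¹ • ∑ i ∈ Finset.range n, Measure.dirac (ξs i ω))
    (vfun : Measure Ξ → ℝ)
    (hvfun : ∀ Q : Measure Ξ, vfun Q = sInf ((fun z => ∫ ξ, f z ξ ∂Q) '' Zad))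
    (zsol : Measure Ξ → H)
    (hzsol : ∀ Q : Measure Ξ, IsProbabilityMeasure Q →
      zsol Q ∈ Zad ∧ ∀ z ∈ Zad, (∫ ξ, f (zsol Q) ξ ∂Q) ≤ ∫ ξ, f z ξ ∂Q) :
    ∀ᵐ ω ∂ℙ,
      Tendsto (fun n => vfun (Pemp n ω)) atTop (𝓝 (vfun P)) ∧
      Tendsto (fun n => ‖zsol (Pemp n ω) - zsol P‖) atTop (𝓝 0) := by
  classical
  haveI : SecondCountableTopology Ξ := UniformSpace.secondCountable_of_separable Ξ
  -- Ξ is nonempty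
  have hΞ : Nonempty Ξ := by
    by_contra h
    rw [not_nonempty_iff] at h
    have h1 : P Set.univ = 1 := measure_univ
    rw [Set.univ_eq_empty_iff.mpr h, measure_empty] at h1
    exact zero_ne_one h1
  have hCg : 0 ≤ Cg := le_trans (norm_nonneg _) (hgb hΞ.some)
  obtain ⟨R₀, hR₀⟩ := isBounded_iff_forall_norm_le.mp hZbd
  set R : ℝ := max R₀ 0 with hRdef
  have hR : ∀ z ∈ Zad, ‖z‖ ≤ R := fun z hz => le_trans (hR₀ z hz) (le_max_left _ _)
  have hR0 : (0 : ℝ) ≤ R := le_max_right _ _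
  set e : ℝ := ‖E‖ with hedef
  have he : 0 ≤ e := norm_nonneg _
  set C₁ : ℝ := max C₀ 0 with hC₁def
  have hC₁0 : 0 ≤ C₁ := le_max_right _ _
  have hgLip' : ∀ ξ ξ' : Ξ, ‖g ξ - g ξ'‖ ≤ C₁ * dist ξ ξ' :=
    fun ξ ξ' => le_trans (hgLip ξ ξ')
      (mul_le_mul_of_nonneg_right (le_max_left _ _) dist_nonneg)
  have hALip' : ∀ ξ ξ' : Ξ, ‖A ξ - A ξ'‖ ≤ C₁ * dist ξ ξ' :=
    fun ξ ξ' => le_trans (hALip ξ ξ')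
      (mul_le_mul_of_nonneg_right (le_max_left _ _) dist_nonneg)
  -- a priori bound on u
  have hub : ∀ z ξ, ‖u z ξ‖ ≤ e * (‖z‖ + Cg) / γ := by
    intro z ξ
    have hnn : (0:ℝ) ≤ (‖z‖ + Cg) * e :=
      mul_nonneg (by linarith [norm_nonneg z]) he
    have key : γ * ‖u z ξ‖ ^ 2 ≤ ((‖z‖ + Cg) * e) * ‖u z ξ‖ := by
      calc γ * ‖u z ξ‖ ^ 2 ≤ A ξ (u z ξ) (u z ξ) := hcoerc ξ _
        _ = ⟪z + g ξ, E (u z ξ)⟫ := hu z ξ _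
        _ ≤ ‖z + g ξ‖ * ‖E (u z ξ)‖ := real_inner_le_norm _ _
        _ ≤ (‖z‖ + Cg) * (e * ‖u z ξ‖) := by
            apply mul_le_mul ?_ (E.le_opNorm _) (norm_nonneg _)
              (by linarith [norm_nonneg z])
            exact le_trans (norm_add_le _ _) (by linarith [hgb ξ])
        _ = ((‖z‖ + Cg) * e) * ‖u z ξ‖ := by ring
    have := aux_le_div hγ hnn (norm_nonneg _) key
    calc ‖u z ξ‖ ≤ ((‖z‖ + Cg) * e) / γ := this
      _ = e * (‖z‖ + Cg) / γ := by ring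
  -- difference in z
  have hudiff : ∀ z z' ξ, ‖u z ξ - u z' ξ‖ ≤ e * ‖z - z'‖ / γ := by
    intro z z' ξ
    set w := u z ξ - u z' ξ with hw
    have hAw : ∀ v, A ξ w v = ⟪z - z', E v⟫ := by
      intro v
      have h1 : A ξ w v = A ξ (u z ξ) v - A ξ (u z' ξ) v := by
        rw [hw, map_sub]; rfl
      have h2 : (⟪z + g ξ, E v⟫:ℝ) - ⟪z' + g ξ, E v⟫ = ⟪z - z', E v⟫ := by
        rw [← inner_sub_left]
        congr 1
        abel
      rw [h1, hu, hu, h2]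
    have hnn : (0:ℝ) ≤ ‖z - z'‖ * e := mul_nonneg (norm_nonneg _) he
    have key : γ * ‖w‖ ^ 2 ≤ (‖z - z'‖ * e) * ‖w‖ := by
      calc γ * ‖w‖ ^ 2 ≤ A ξ w w := hcoerc ξ _
        _ = ⟪z - z', E w⟫ := hAw w
        _ ≤ ‖z - z'‖ * ‖E w‖ := real_inner_le_norm _ _
        _ ≤ ‖z - z'‖ * (e * ‖w‖) :=
            mul_le_mul_of_nonneg_left (E.le_opNorm _) (norm_nonneg _)
        _ = (‖z - z'‖ * e) * ‖w‖ := by ring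
    have := aux_le_div hγ hnn (norm_nonneg _) key
    calc ‖w‖ ≤ (‖z - z'‖ * e) / γ := this
      _ = e * ‖z - z'‖ / γ := by ring
  -- difference in ξ
  have huxi : ∀ z ξ ξ', ‖u z ξ - u z ξ'‖ ≤
      C₁ * (e + e * (‖z‖ + Cg) / γ) * dist ξ ξ' / γ := by
    intro z ξ ξ'
    set w := u z ξ - u z ξ' with hw
    have hMz : (0:ℝ) ≤ e * (‖z‖ + Cg) / γ := by
      apply div_nonneg _ hγ.le
      exact mul_nonneg he (by linarith [norm_nonneg z])
    have hnn : (0:ℝ) ≤ C₁ * (e + e * (‖z‖ + Cg) / γ) * dist ξ ξ' :=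
      mul_nonneg (mul_nonneg hC₁0 (by linarith)) dist_nonneg
    have hAw : ∀ v, A ξ w v = ⟪g ξ - g ξ', E v⟫ + (A ξ' - A ξ) (u z ξ') v := by
      intro v
      have h1 : A ξ w v = A ξ (u z ξ) v - A ξ (u z ξ') v := by
        rw [hw, map_sub]; rfl
      have h2 : (A ξ' - A ξ) (u z ξ') v = A ξ' (u z ξ') v - A ξ (u z ξ') v := rfl
      have h3 : (⟪z + g ξ, E v⟫:ℝ) = ⟪g ξ - g ξ', E v⟫ + ⟪z + g ξ', E v⟫ := by
        rw [← inner_add_left]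
        congr 1
        abel
      rw [h1, hu, h2, hu]
      linarith [h3]
    have key : γ * ‖w‖ ^ 2 ≤ (C₁ * (e + e * (‖z‖ + Cg) / γ) * dist ξ ξ') * ‖w‖ := by
      have b1 : (⟪g ξ - g ξ', E w⟫:ℝ) ≤ (C₁ * dist ξ ξ') * (e * ‖w‖) := by
        calc (⟪g ξ - g ξ', E w⟫:ℝ) ≤ ‖g ξ - g ξ'‖ * ‖E w‖ := real_inner_le_norm _ _
          _ ≤ (C₁ * dist ξ ξ') * (e * ‖w‖) := by
              apply mul_le_mul (hgLip' ξ ξ') (E.le_opNorm _) (norm_nonneg _)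
              exact mul_nonneg hC₁0 dist_nonneg
      have b2 : (A ξ' - A ξ) (u z ξ') w ≤ (C₁ * dist ξ ξ') * ((e * (‖z‖ + Cg) / γ) * ‖w‖) := by
        calc (A ξ' - A ξ) (u z ξ') w ≤ ‖(A ξ' - A ξ) (u z ξ') w‖ := le_abs_self _
          _ ≤ ‖(A ξ' - A ξ) (u z ξ')‖ * ‖w‖ := ((A ξ' - A ξ) (u z ξ')).le_opNorm w
          _ ≤ (‖A ξ' - A ξ‖ * ‖u z ξ'‖) * ‖w‖ :=
              mul_le_mul_of_nonneg_right ((A ξ' - A ξ).le_opNorm _) (norm_nonneg _)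
          _ ≤ ((C₁ * dist ξ ξ') * (e * (‖z‖ + Cg) / γ)) * ‖w‖ := by
              apply mul_le_mul_of_nonneg_right _ (norm_nonneg _)
              apply mul_le_mul _ (hub z ξ') (norm_nonneg _)
                (mul_nonneg hC₁0 dist_nonneg)
              calc ‖A ξ' - A ξ‖ ≤ C₁ * dist ξ' ξ := hALip' ξ' ξ
                _ = C₁ * dist ξ ξ' := by rw [dist_comm]
          _ = (C₁ * dist ξ ξ') * ((e * (‖z‖ + Cg) / γ) * ‖w‖) := by ring
      calc γ * ‖w‖ ^ 2 ≤ A ξ w w := hcoerc ξ _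
        _ = ⟪g ξ - g ξ', E w⟫ + (A ξ' - A ξ) (u z ξ') w := hAw w
        _ ≤ (C₁ * dist ξ ξ') * (e * ‖w‖) + (C₁ * dist ξ ξ') * ((e * (‖z‖ + Cg) / γ) * ‖w‖) :=
            add_le_add b1 b2
        _ = (C₁ * (e + e * (‖z‖ + Cg) / γ) * dist ξ ξ') * ‖w‖ := by ring
    exact aux_le_div hγ hnn (norm_nonneg _) key
  -- midpoint property
  have humid : ∀ z z' ξ, u ((2:ℝ)⁻¹ • (z + z')) ξ = (2:ℝ)⁻¹ • (u z ξ + u z' ξ) := by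
    intro z z' ξ
    set m := (2:ℝ)⁻¹ • (z + z') with hm
    set w := u m ξ - (2:ℝ)⁻¹ • (u z ξ + u z' ξ) with hw
    have hAw : ∀ v, A ξ w v = 0 := by
      intro v
      have h1 : A ξ w v = A ξ (u m ξ) v
          - (2:ℝ)⁻¹ * (A ξ (u z ξ) v + A ξ (u z' ξ) v) := by
        rw [hw, map_sub, _root_.map_smul, map_add]
        simp [ContinuousLinearMap.sub_apply, ContinuousLinearMap.smul_apply,
          ContinuousLinearMap.add_apply]
        ring
      have h2 : (⟪m + g ξ, E v⟫:ℝ) = (2:ℝ)⁻¹ * (⟪z + g ξ, E v⟫ + ⟪z' + g ξ, E v⟫) := by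
        rw [← inner_add_left, ← real_inner_smul_left]
        congr 1
        rw [hm]
        module
      rw [h1, hu, hu, hu, h2]
      ring
    have hle : γ * ‖w‖ ^ 2 ≤ 0 := le_of_le_of_eq (hcoerc ξ w) (hAw w)
    have hwz : w = 0 := by
      have hsq : ‖w‖ ^ 2 ≤ 0 := le_of_mul_le_mul_left (by simpa using hle) hγ
      have h0 : ‖w‖ ^ 2 = 0 := le_antisymm hsq (sq_nonneg _)
      rw [← norm_eq_zero]
      exact (pow_eq_zero_iff two_ne_zero).mp h0
    have := sub_eq_zero.mp (hw ▸ hwz)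
    exact this
  -- constants
  set M₁ : ℝ := e * (e * (R + Cg) / γ) + ‖ut‖ with hM₁def
  have hM₁0 : 0 ≤ M₁ := by positivity
  have hM₁ : ∀ z ∈ Zad, ∀ ξ, ‖E (u z ξ) - ut‖ ≤ M₁ := by
    intro z hz ξ
    have h5 : ‖u z ξ‖ ≤ e * (R + Cg) / γ :=
      le_trans (hub z ξ) (by gcongr; exact hR z hz)
    calc ‖E (u z ξ) - ut‖ ≤ ‖E (u z ξ)‖ + ‖ut‖ := norm_sub_le _ _
      _ ≤ e * ‖u z ξ‖ + ‖ut‖ := add_le_add (E.le_opNorm _) le_rfl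
      _ ≤ e * (e * (R + Cg) / γ) + ‖ut‖ := by
          have := mul_le_mul_of_nonneg_left h5 he
          linarith
  set Mf : ℝ := (1/2) * M₁ ^ 2 + (α/2) * R ^ 2 with hMfdef
  have hMf0 : 0 ≤ Mf := by positivity
  have hfnn : ∀ z ξ, 0 ≤ f z ξ := by
    intro z ξ; rw [hf]; positivity
  have hfbd : ∀ z ∈ Zad, ∀ ξ, |f z ξ| ≤ Mf := by
    intro z hz ξ
    rw [abs_of_nonneg (hfnn z ξ), hf]
    have h1 := hM₁ z hz ξ
    have h2 := hR z hz
    have h3 : ‖E (u z ξ) - ut‖ ^ 2 ≤ M₁ ^ 2 := by nlinarith [norm_nonneg (E (u z ξ) - ut)]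
    have h4 : ‖z‖ ^ 2 ≤ R ^ 2 := by nlinarith [norm_nonneg z]
    have h5 : α/2*‖z‖^2 ≤ α/2*R^2 :=
      mul_le_mul_of_nonneg_left h4 (le_of_lt (half_pos hα))
    rw [hMfdef]
    exact add_le_add (mul_le_mul_of_nonneg_left h3 (by norm_num)) h5
  -- Lipschitz in z on Zad
  set Kz : ℝ := M₁ * (e * e / γ) + α * R with hKzdef
  have hKz0 : 0 ≤ Kz := by positivity
  have hfz : ∀ ξ, ∀ z ∈ Zad, ∀ z' ∈ Zad, |f z ξ - f z' ξ| ≤ Kz * ‖z - z'‖ := by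
    intro ξ z hz z' hz'
    rw [hf, hf]
    have habs := aux_sq_diff (hM₁ z hz ξ) (hM₁ z' hz' ξ)
    have hzz := aux_sq_diff (hR z hz) (hR z' hz')
    have hab : ‖(E (u z ξ) - ut) - (E (u z' ξ) - ut)‖ ≤ e * (e * ‖z - z'‖ / γ) := by
      have hrw : (E (u z ξ) - ut) - (E (u z' ξ) - ut) = E (u z ξ - u z' ξ) := by
        rw [map_sub]; abel
      rw [hrw]
      exact le_trans (E.le_opNorm _) (mul_le_mul_of_nonneg_left (hudiff z z' ξ) he)
    have hrw2 : (1 / 2 * ‖E (u z ξ) - ut‖ ^ 2 + α / 2 * ‖z‖ ^ 2)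
        - (1 / 2 * ‖E (u z' ξ) - ut‖ ^ 2 + α / 2 * ‖z'‖ ^ 2)
        = 1/2 * (‖E (u z ξ) - ut‖ ^ 2 - ‖E (u z' ξ) - ut‖ ^ 2)
          + α/2 * (‖z‖ ^ 2 - ‖z'‖ ^ 2) := by ring
    rw [hrw2]
    refine le_trans (abs_add_le _ _) ?_
    rw [abs_mul, abs_mul, abs_of_nonneg (by norm_num : (0:ℝ) ≤ 1/2),
      abs_of_nonneg (le_of_lt (half_pos hα))]
    have t1 : |‖E (u z ξ) - ut‖ ^ 2 - ‖E (u z' ξ) - ut‖ ^ 2|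
        ≤ 2 * M₁ * (e * (e * ‖z - z'‖ / γ)) :=
      le_trans habs (mul_le_mul_of_nonneg_left hab (by positivity))
    have t2 : α/2 * |‖z‖ ^ 2 - ‖z'‖ ^ 2| ≤ α/2 * (2 * R * ‖z - z'‖) :=
      mul_le_mul_of_nonneg_left hzz (le_of_lt (half_pos hα))
    have hKzrw : Kz * ‖z - z'‖ = 1/2 * (2 * M₁ * (e * (e * ‖z - z'‖ / γ)))
        + α/2 * (2 * R * ‖z - z'‖) := by rw [hKzdef]; ring
    rw [hKzrw]
    have t1' : 1/2 * |‖E (u z ξ) - ut‖ ^ 2 - ‖E (u z' ξ) - ut‖ ^ 2|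
        ≤ 1/2 * (2 * M₁ * (e * (e * ‖z - z'‖ / γ))) :=
      mul_le_mul_of_nonneg_left t1 (by norm_num)
    exact add_le_add t1' t2
  -- Lipschitz in ξ uniformly on Zad
  set Kξ : ℝ := M₁ * (e * (C₁ * (e + e * (R + Cg) / γ) / γ)) with hKξdef
  have hKξ0 : 0 ≤ Kξ := by positivity
  have hfxi : ∀ z ∈ Zad, ∀ ξ ξ', |f z ξ - f z ξ'| ≤ Kξ * dist ξ ξ' := by
    intro z hz ξ ξ'
    rw [hf, hf]
    have habs := aux_sq_diff (hM₁ z hz ξ) (hM₁ z hz ξ')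
    have hab : ‖(E (u z ξ) - ut) - (E (u z ξ') - ut)‖
        ≤ e * (C₁ * (e + e * (R + Cg) / γ) * dist ξ ξ' / γ) := by
      have hrw : (E (u z ξ) - ut) - (E (u z ξ') - ut) = E (u z ξ - u z ξ') := by
        rw [map_sub]; abel
      rw [hrw]
      refine le_trans (E.le_opNorm _) (mul_le_mul_of_nonneg_left ?_ he)
      refine le_trans (huxi z ξ ξ') ?_
      gcongr
      exact hR z hz
    have hrw2 : (1 / 2 * ‖E (u z ξ) - ut‖ ^ 2 + α / 2 * ‖z‖ ^ 2)
        - (1 / 2 * ‖E (u z ξ') - ut‖ ^ 2 + α / 2 * ‖z‖ ^ 2)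
        = 1/2 * (‖E (u z ξ) - ut‖ ^ 2 - ‖E (u z ξ') - ut‖ ^ 2) := by ring
    rw [hrw2, abs_mul, abs_of_nonneg (by norm_num : (0:ℝ) ≤ 1/2)]
    have t1 : |‖E (u z ξ) - ut‖ ^ 2 - ‖E (u z ξ') - ut‖ ^ 2|
        ≤ 2 * M₁ * (e * (C₁ * (e + e * (R + Cg) / γ) * dist ξ ξ' / γ)) :=
      le_trans habs (mul_le_mul_of_nonneg_left hab (by positivity))
    have hKrw : Kξ * dist ξ ξ'
        = 1/2 * (2 * M₁ * (e * (C₁ * (e + e * (R + Cg) / γ) * dist ξ ξ' / γ))) := by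
      rw [hKξdef]; ring
    rw [hKrw]
    exact mul_le_mul_of_nonneg_left t1 (by norm_num)
  -- continuity of f in ξ for fixed z ∈ Zad
  have hfcont : ∀ z ∈ Zad, Continuous (fun ξ => f z ξ) := by
    intro z hz
    apply (LipschitzWith.of_dist_le_mul (K := Real.toNNReal Kξ)
      (f := fun ξ => f z ξ) ?_).continuous
    intro ξ ξ'
    rw [Real.dist_eq]
    exact le_trans (hfxi z hz ξ ξ')
      (mul_le_mul_of_nonneg_right (Real.le_coe_toNNReal Kξ) dist_nonneg)
  -- integrability of f z over finite measures
  have hfint : ∀ z ∈ Zad, ∀ (Q : Measure Ξ), IsFiniteMeasure Q →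
      Integrable (fun ξ => f z ξ) Q := by
    intro z hz Q hQ
    refine ⟨((hfcont z hz).stronglyMeasurable).aestronglyMeasurable, ?_⟩
    exact @HasFiniteIntegral.of_bounded _ _ _ Q _ hQ _ Mf
      (Eventually.of_forall fun ξ => by
        rw [Real.norm_eq_abs]; exact hfbd z hz ξ)
  -- the bounded continuous function valued map
  set Φ : Ξ → BoundedContinuousFunction (↥Zad) ℝ := fun ξ =>
    ⟨⟨fun z => f z.1 ξ, by
      apply (LipschitzWith.of_dist_le_mul (K := Real.toNNReal Kz)
        (f := fun z : ↥Zad => f z.1 ξ) ?_).continuous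
      intro z z'
      rw [Real.dist_eq, Subtype.dist_eq, dist_eq_norm]
      exact le_trans (hfz ξ z.1 z.2 z'.1 z'.2)
        (mul_le_mul_of_nonneg_right (Real.le_coe_toNNReal Kz) (norm_nonneg _))⟩,
      2 * Mf + 1, by
        intro z z'
        rw [Real.dist_eq]
        calc |f z.1 ξ - f z'.1 ξ| ≤ |f z.1 ξ| + |f z'.1 ξ| := abs_sub _ _
          _ ≤ 2 * Mf + 1 := by
              have := hfbd z.1 z.2 ξ
              have := hfbd z'.1 z'.2 ξ
              linarith⟩ with hΦdef
  have hΦapp : ∀ ξ (z : ↥Zad), Φ ξ z = f z.1 ξ := fun ξ z => rfl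
  have hΦnorm : ∀ ξ, ‖Φ ξ‖ ≤ Mf := by
    intro ξ
    rw [BoundedContinuousFunction.norm_le hMf0]
    intro z
    rw [hΦapp, Real.norm_eq_abs]
    exact hfbd z.1 z.2 ξ
  have hΦdist : ∀ ξ ξ', dist (Φ ξ) (Φ ξ') ≤ Kξ * dist ξ ξ' := by
    intro ξ ξ'
    rw [BoundedContinuousFunction.dist_le (mul_nonneg hKξ0 dist_nonneg)]
    intro z
    rw [hΦapp, hΦapp, Real.dist_eq]
    exact hfxi z.1 z.2 ξ ξ'
  have hΦcont : Continuous Φ :=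
    (LipschitzWith.of_dist_le_mul (K := Real.toNNReal Kξ) (f := Φ) fun ξ ξ' =>
      le_trans (hΦdist ξ ξ')
        (mul_le_mul_of_nonneg_right (Real.le_coe_toNNReal Kξ) dist_nonneg)).continuous
  letI : MeasurableSpace (BoundedContinuousFunction (↥Zad) ℝ) := borel _
  haveI : BorelSpace (BoundedContinuousFunction (↥Zad) ℝ) := ⟨rfl⟩
  have hΦmeas : Measurable Φ := hΦcont.measurable
  have hΦsm : StronglyMeasurable Φ := hΦcont.stronglyMeasurable
  -- the iid sequence of BCF-valued random elements
  set X : ℕ → Ω → BoundedContinuousFunction (↥Zad) ℝ := fun i ω => Φ (ξs i ω) with hXdef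
  have hXsm : ∀ i, StronglyMeasurable (X i) := fun i =>
    hΦcont.comp_stronglyMeasurable (hξmeas i).stronglyMeasurable
  have hXint : Integrable (X 0) ℙ :=
    ⟨(hXsm 0).aestronglyMeasurable,
      HasFiniteIntegral.of_bounded (C := Mf) (Eventually.of_forall fun ω => hΦnorm _)⟩
  have hXindep : Pairwise (Function.onFun (ProbabilityTheory.IndepFun · · ℙ) X) := fun i j hij =>
    (ProbabilityTheory.iIndepFun.indepFun hindep hij).comp hΦmeas hΦmeas
  have hXid : ∀ i, ProbabilityTheory.IdentDistrib (X i) (X 0) ℙ ℙ := fun i =>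
    (⟨(hξmeas i).aemeasurable, (hξmeas 0).aemeasurable, by rw [hdist i, hdist 0]⟩ :
      ProbabilityTheory.IdentDistrib (ξs i) (ξs 0) ℙ ℙ).comp hΦmeas
  have hSLLN := ProbabilityTheory.strong_law_ae X hXint hXindep hXid
  -- identify the limit
  set G : BoundedContinuousFunction (↥Zad) ℝ := ∫ ξ, Φ ξ ∂P with hGdef
  have hΦintP : Integrable Φ P :=
    ⟨hΦsm.aestronglyMeasurable,
      HasFiniteIntegral.of_bounded (C := Mf) (Eventually.of_forall hΦnorm)⟩
  have hEG : ∫ ω, X 0 ω ∂ℙ = G := by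
    have := integral_map (μ := ℙ) (φ := ξs 0) (hξmeas 0).aemeasurable
      (f := Φ) (by rw [hdist 0]; exact hΦsm.aestronglyMeasurable)
    rw [hdist 0] at this
    rw [hGdef, ← this]
  have hGeval : ∀ z (hz : z ∈ Zad), ∫ ξ, f z ξ ∂P = G (⟨z, hz⟩ : ↥Zad) := by
    intro z hz
    have h := (BoundedContinuousFunction.evalCLM ℝ (⟨z, hz⟩ : ↥Zad)).integral_comp_comm hΦintP
    exact h
  -- empirical measures are probability measures for n ≥ 1
  have hPempProb : ∀ n, 1 ≤ n → ∀ ω, IsProbabilityMeasure (Pemp n ω) := by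
    intro n hn ω
    constructor
    rw [hPemp]
    rw [Measure.smul_apply, Measure.finset_sum_apply]
    simp only [Measure.dirac_apply' _ MeasurableSet.univ, Set.indicator_univ,
      Pi.one_apply, Finset.sum_const, Finset.card_range, nsmul_eq_mul, mul_one,
      smul_eq_mul]
    have hn0 : (n:ℝ≥0∞) ≠ 0 := by
      simp only [ne_eq, Nat.cast_eq_zero]
      omega
    exact ENNReal.inv_mul_cancel hn0 (ENNReal.natCast_ne_top n)
  -- evaluation of empirical integrals
  have hFemp : ∀ n ω z (hz : z ∈ Zad), ∫ ξ, f z ξ ∂(Pemp n ω) =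
      ((n:ℝ)⁻¹ • ∑ i ∈ Finset.range n, X i ω) (⟨z, hz⟩ : ↥Zad) := by
    intro n ω z hz
    rw [hPemp, integral_smul_measure,
      integral_finset_sum_measure (fun i _ => hfint z hz _ inferInstance)]
    simp only [integral_dirac]
    rw [BoundedContinuousFunction.coe_smul]
    simp only [Pi.smul_apply, smul_eq_mul, ENNReal.toReal_inv, ENNReal.toReal_natCast]
    congr 1
    rw [← BoundedContinuousFunction.evalCLM_apply (𝕜 := ℝ), map_sum]
    rfl
  -- strong quadratic growth of the true objective at its minimizer
  obtain ⟨hzPmem, hzPopt⟩ := hzsol P inferInstance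
  have hquad : ∀ z ∈ Zad, α/4 * ‖z - zsol P‖^2 ≤
      (∫ ξ, f z ξ ∂P) - ∫ ξ, f (zsol P) ξ ∂P := by
    intro z hz
    set zP := zsol P with hzPdef
    set m : H := (2:ℝ)⁻¹ • (z + zP) with hm
    have hmZ : m ∈ Zad := by
      have h := hZcvx hz hzPmem (by norm_num : (0:ℝ) ≤ 1/2)
        (by norm_num : (0:ℝ) ≤ 1/2) (by norm_num)
      have : m = (1/2:ℝ) • z + (1/2:ℝ) • zP := by rw [hm]; module
      rw [this]; exact h
    have hpt : ∀ ξ, f m ξ ≤ (1/2) * f z ξ + (1/2) * f zP ξ - α/8 * ‖z - zP‖^2 := by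
      intro ξ
      rw [hf, hf, hf, hm, humid]
      set a : H := E (u z ξ) - ut with ha
      set b : H := E (u zP ξ) - ut with hb
      have hE2 : E ((2:ℝ)⁻¹ • (u z ξ + u zP ξ)) - ut = (2:ℝ)⁻¹ • (a + b) := by
        rw [_root_.map_smul, map_add, ha, hb]
        module
      rw [hE2]
      have n1 : ‖(2:ℝ)⁻¹ • (a + b)‖^2 = (1/4) * ‖a + b‖^2 := by
        rw [norm_smul]
        simp [Real.norm_eq_abs]
        ring
      have n2 : ‖(2:ℝ)⁻¹ • (z + zP)‖^2 = (1/4) * ‖z + zP‖^2 := by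
        rw [norm_smul]
        simp [Real.norm_eq_abs]
        ring
      have p1 : ‖a + b‖^2 ≤ 2*(‖a‖^2 + ‖b‖^2) := by
        have := parallelogram_law_with_norm ℝ a b
        nlinarith [sq_nonneg ‖a - b‖]
      have p2 : ‖z + zP‖^2 = 2*(‖z‖^2 + ‖zP‖^2) - ‖z - zP‖^2 := by
        have := parallelogram_law_with_norm ℝ z zP
        nlinarith []
      have p2α : α * ‖z + zP‖^2 = α * (2*(‖z‖^2 + ‖zP‖^2) - ‖z - zP‖^2) := by
        rw [p2]
      have p1' : (1/2) * ((1/4) * ‖a + b‖^2) ≤ (1/2) * ((1/4) * (2*(‖a‖^2 + ‖b‖^2))) := by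
        nlinarith [p1]
      have p2'' : α / 2 * ((1/4) * ‖z + zP‖^2)
          = α/4 * (‖z‖^2 + ‖zP‖^2) - α/8 * ‖z - zP‖^2 := by
        nlinarith [p2α]
      rw [n1, n2]
      nlinarith [p1', p2'']
    have hint1 := hfint z hz P inferInstance
    have hint2 := hfint (zsol P) hzPmem P inferInstance
    have hintm := hfint m hmZ P inferInstance
    have hiA : Integrable (fun ξ => (1/2) * f z ξ) P := hint1.const_mul _
    have hiB : Integrable (fun ξ => (1/2) * f zP ξ) P := hint2.const_mul _
    have hiAB : Integrable (fun ξ => (1/2) * f z ξ + (1/2) * f zP ξ) P := hiA.add hiB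
    have hintrhs : Integrable
        (fun ξ => (1/2) * f z ξ + (1/2) * f zP ξ - α/8 * ‖z - zP‖^2) P :=
      hiAB.sub (integrable_const _)
    have h1 : ∫ ξ, f m ξ ∂P
        ≤ ∫ ξ, ((1/2) * f z ξ + (1/2) * f zP ξ - α/8 * ‖z - zP‖^2) ∂P :=
      integral_mono hintm hintrhs hpt
    rw [integral_sub hiAB (integrable_const _), integral_add hiA hiB,
      integral_const_mul, integral_const_mul, integral_const] at h1
    simp only [probReal_univ, one_smul] at h1
    have h0 : ∫ ξ, f zP ξ ∂P ≤ ∫ ξ, f m ξ ∂P := hzPopt m hmZ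
    linarith
  -- main almost sure statement
  filter_upwards [hSLLN] with ω hω
  rw [hEG] at hω
  set Sn : ℕ → BoundedContinuousFunction (↥Zad) ℝ :=
    fun n => (n:ℝ)⁻¹ • ∑ i ∈ Finset.range n, X i ω with hSndef
  have hε : Tendsto (fun n => dist (Sn n) G) atTop (𝓝 0) :=
    tendsto_iff_dist_tendsto_zero.mp hω
  have hptw : ∀ n z (hz : z ∈ Zad),
      |(∫ ξ, f z ξ ∂(Pemp n ω)) - ∫ ξ, f z ξ ∂P| ≤ dist (Sn n) G := by
    intro n z hz
    rw [hFemp n ω z hz, hGeval z hz, ← Real.dist_eq]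
    exact BoundedContinuousFunction.dist_coe_le_dist _
  constructor
  · rw [tendsto_iff_dist_tendsto_zero]
    apply squeeze_zero (fun n => dist_nonneg) ?_ hε
    intro n
    rw [Real.dist_eq, hvfun, hvfun]
    exact aux_sInf hZne _ _
      (fun z hz => integral_nonneg fun ξ => hfnn z ξ)
      (fun z hz => integral_nonneg fun ξ => hfnn z ξ)
      (fun z hz => hptw n z hz)
  · apply squeeze_zero' (Eventually.of_forall fun n => norm_nonneg _)
      (g := fun n => Real.sqrt ((8/α) * dist (Sn n) G)) ?_ ?_
    · filter_upwards [eventually_ge_atTop 1] with n hn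
      haveI hprob := hPempProb n hn ω
      obtain ⟨hznmem, hznopt⟩ := hzsol (Pemp n ω) hprob
      have e1 := abs_le.mp (hptw n (zsol (Pemp n ω)) hznmem)
      have e2 : ∫ ξ, f (zsol (Pemp n ω)) ξ ∂(Pemp n ω)
          ≤ ∫ ξ, f (zsol P) ξ ∂(Pemp n ω) := hznopt (zsol P) hzPmem
      have e3 := abs_le.mp (hptw n (zsol P) hzPmem)
      have e4 := hquad (zsol (Pemp n ω)) hznmem
      have e5 : α/4 * ‖zsol (Pemp n ω) - zsol P‖^2 ≤ 2 * dist (Sn n) G := by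
        linarith [e1.1, e1.2, e3.1, e3.2]
      have e6 : ‖zsol (Pemp n ω) - zsol P‖^2 ≤ (8/α) * dist (Sn n) G := by
        rw [div_mul_eq_mul_div, le_div_iff₀ hα]
        nlinarith [e5]
      calc ‖zsol (Pemp n ω) - zsol P‖
          = Real.sqrt (‖zsol (Pemp n ω) - zsol P‖^2) := (Real.sqrt_sq (norm_nonneg _)).symm
        _ ≤ Real.sqrt ((8/α) * dist (Sn n) G) := Real.sqrt_le_sqrt e6
    · have h8 : Tendsto (fun n => (8/α) * dist (Sn n) G) atTop (𝓝 0) := by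
        have := hε.const_mul (8/α)
        simpa using this
      have := (Real.continuous_sqrt.tendsto 0).comp h8
      rw [Real.sqrt_zero] at this
      exact this
end

section
/- Assume Ξ ⊆ ℝ^d is bounded and convex with Ξ ⊆ cl(int Ξ), and that for all u, v ∈ V the function ξ ↦ ⟨A(ξ)u, v⟩ is continuously differentiable on int Ξ. Then for all w, y ∈ V* the function ξ ↦ ⟨y, A(ξ)^{-1} w⟩ is continuously differentiable on int Ξ, and for each ξ ∈ int Ξ and each j ∈ {1,…,d} its j-th partial derivative equals −∂/∂ξ_j [ξ' ↦ ⟨A(ξ')u, v⟩] evaluated at ξ, where u = A(ξ)^{-1} w ∈ V and v ∈ V is the unique element satisfying ⟨s, v⟩ = ⟨y, A(ξ)^{-1} s⟩ for all s ∈ V*. -/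
open MeasureTheory Filter Topology
open scoped RealInnerProductSpace ENNReal

section Aux
variable {V : Type*} [NormedAddCommGroup V] [InnerProductSpace ℝ V] [CompleteSpace V]

/-- Riesz representation of continuous linear functionals on the dual. -/
lemma exists_riesz (φ : (V →L[ℝ] ℝ) →L[ℝ] ℝ) :
    ∃! v : V, ∀ s : V →L[ℝ] ℝ, s v = φ s := by
  set td := InnerProductSpace.toDual ℝ V with htd
  let ψ : V →L[ℝ] ℝ :=
    { toFun := fun x => φ (td x)
      map_add' := fun a b => by simp
      map_smul' := fun c a => by simp
      cont := φ.continuous.comp td.continuous }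
  refine ⟨td.symm ψ, ?_, ?_⟩
  · intro s
    have hx : s = td (td.symm s) := (td.apply_symm_apply s).symm
    rw [hx]
    have h1 : (td (td.symm s)) (td.symm ψ) = ⟪td.symm s, td.symm ψ⟫ :=
      InnerProductSpace.toDual_apply_apply
    have h2 : ψ (td.symm s) = ⟪td.symm ψ, td.symm s⟫ := by
      have := (InnerProductSpace.toDual_apply_apply (𝕜 := ℝ) (x := td.symm ψ) (y := td.symm s))
      rw [← this, td.apply_symm_apply]
    have h3 : ψ (td.symm s) = φ (td (td.symm s)) := rfl
    rw [h1, real_inner_comm, ← h2, h3]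
  · intro v' hv'
    have h0 : ∀ s : V →L[ℝ] ℝ, s v' = s (td.symm ψ) := by
      intro s
      rw [hv' s]
      have hx : s = td (td.symm s) := (td.apply_symm_apply s).symm
      rw [hx]
      have h1 : (td (td.symm s)) (td.symm ψ) = ⟪td.symm s, td.symm ψ⟫ :=
        InnerProductSpace.toDual_apply_apply
      have h2 : ψ (td.symm s) = ⟪td.symm ψ, td.symm s⟫ := by
        have := (InnerProductSpace.toDual_apply_apply (𝕜 := ℝ) (x := td.symm ψ) (y := td.symm s))
        rw [← this, td.apply_symm_apply]
      rw [h1, real_inner_comm, ← h2]; rfl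
    have h1 := h0 (td (v' - td.symm ψ))
    have key : ∀ z : V, (td (v' - td.symm ψ)) z = ⟪v' - td.symm ψ, z⟫ :=
      fun z => InnerProductSpace.toDual_apply_apply
    have h2 : ⟪v' - td.symm ψ, v'⟫ = ⟪v' - td.symm ψ, td.symm ψ⟫ := by
      rw [← key v', ← key (td.symm ψ)]; exact h1
    have h3 : ⟪v' - td.symm ψ, v' - td.symm ψ⟫ = (0:ℝ) := by
      rw [inner_sub_right, h2]; ring
    have := inner_self_eq_zero.mp h3
    exact sub_eq_zero.mp this

lemma riesz_diff (φ φ' : (V →L[ℝ] ℝ) →L[ℝ] ℝ) {v v' : V}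
    (h : ∀ s : V →L[ℝ] ℝ, s v = φ s) (h' : ∀ s : V →L[ℝ] ℝ, s v' = φ' s) :
    ‖v - v'‖ ≤ ‖φ - φ'‖ := by
  set td := InnerProductSpace.toDual ℝ V with htd
  set s := td (v - v') with hs
  have h1 : ‖v - v'‖ ^ 2 = (φ - φ') s := by
    have e1 : s (v - v') = ⟪v - v', v - v'⟫ := InnerProductSpace.toDual_apply_apply
    have e2 : s v - s v' = ‖v - v'‖ ^ 2 := by
      rw [← map_sub, e1, real_inner_self_eq_norm_sq]
    rw [ContinuousLinearMap.sub_apply, ← h s, ← h' s, e2]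
  have h2 : (φ - φ') s ≤ ‖φ - φ'‖ * ‖v - v'‖ := by
    calc (φ - φ') s ≤ ‖(φ - φ') s‖ := le_abs_self _
    _ ≤ ‖φ - φ'‖ * ‖s‖ := (φ - φ').le_opNorm s
    _ = ‖φ - φ'‖ * ‖v - v'‖ := by rw [hs, td.norm_map]
  nlinarith [norm_nonneg (v - v'), norm_nonneg (φ - φ')]

/-- Bilinear Banach–Steinhaus. -/
lemma bilin_ubp {ι : Type*} (T : ι → V →L[ℝ] V →L[ℝ] ℝ)
    (h : ∀ u v : V, ∃ M, ∀ i, ‖T i u v‖ ≤ M) : ∃ C, ∀ i, ‖T i‖ ≤ C := by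
  have h1 : ∀ u : V, ∃ Cu, ∀ i, ‖T i u‖ ≤ Cu := fun u =>
    banach_steinhaus (fun v => h u v)
  exact banach_steinhaus h1

end Aux

set_option maxHeartbeats 8000000 in
set_option synthInstance.maxHeartbeats 400000 in
/-- Differentiability of `ξ ↦ ⟨y, A(ξ)⁻¹ w⟩` and the formula for its
partial derivatives. -/
theorem statement11
    {V : Type*} [NormedAddCommGroup V] [InnerProductSpace ℝ V] [CompleteSpace V]
    {d : ℕ} (Ξ : Set (EuclideanSpace ℝ (Fin d)))
    (hΞbd : Bornology.IsBounded Ξ) (hΞcvx : Convex ℝ Ξ)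
    (hΞcl : Ξ ⊆ closure (interior Ξ))
    (A : EuclideanSpace ℝ (Fin d) → V →L[ℝ] (V →L[ℝ] ℝ))
    (γ L : ℝ) (hγ : 0 < γ) (hγL : γ ≤ L)
    (hcoerc : ∀ ξ ∈ Ξ, ∀ u : V, γ * ‖u‖ ^ 2 ≤ A ξ u u)
    (hbound : ∀ ξ ∈ Ξ, ∀ u : V, ‖A ξ u‖ ≤ L * ‖u‖)
    (Ainv : EuclideanSpace ℝ (Fin d) → (V →L[ℝ] ℝ) →L[ℝ] V)
    (hAinv : ∀ ξ ∈ Ξ, (∀ u : V, Ainv ξ (A ξ u) = u) ∧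
      ∀ s : V →L[ℝ] ℝ, A ξ (Ainv ξ s) = s)
    (hAdiff : ∀ u v : V, ContDiffOn ℝ 1 (fun ξ => A ξ u v) (interior Ξ)) :
    ∀ (w y : V →L[ℝ] ℝ),
      ContDiffOn ℝ 1 (fun ξ => y (Ainv ξ w)) (interior Ξ) ∧
      ∀ ξ ∈ interior Ξ,
        (∃! v : V, ∀ s : V →L[ℝ] ℝ, s v = y (Ainv ξ s)) ∧
        ∀ v : V, (∀ s : V →L[ℝ] ℝ, s v = y (Ainv ξ s)) →
          ∀ j : Fin d,
            fderiv ℝ (fun ξ' => y (Ainv ξ' w)) ξ (EuclideanSpace.single j 1) =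
              - fderiv ℝ (fun ξ' => A ξ' (Ainv ξ w) v) ξ (EuclideanSpace.single j 1) := by
  intro w y
  set Ω := interior Ξ with hΩdef
  have hΩo : IsOpen Ω := isOpen_interior
  have hΩΞ : Ω ⊆ Ξ := interior_subset
  -- basic bound for the inverse
  have hAinvb : ∀ ζ ∈ Ξ, ∀ s : V →L[ℝ] ℝ, ‖Ainv ζ s‖ ≤ γ⁻¹ * ‖s‖ := by
    intro ζ hζ s
    have h1 : γ * ‖Ainv ζ s‖ ^ 2 ≤ A ζ (Ainv ζ s) (Ainv ζ s) := hcoerc ζ hζ _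
    rw [(hAinv ζ hζ).2 s] at h1
    have h2 : s (Ainv ζ s) ≤ ‖s‖ * ‖Ainv ζ s‖ :=
      le_trans (le_abs_self _) (s.le_opNorm _)
    rcases eq_or_lt_of_le (norm_nonneg (Ainv ζ s)) with h0 | h0
    · rw [← h0]; positivity
    · have h3 : γ * ‖Ainv ζ s‖ ≤ ‖s‖ := by nlinarith
      calc ‖Ainv ζ s‖ = γ⁻¹ * (γ * ‖Ainv ζ s‖) := by field_simp
      _ ≤ γ⁻¹ * ‖s‖ := mul_le_mul_of_nonneg_left h3 (by positivity)
  have hAinvop : ∀ ζ ∈ Ξ, ‖Ainv ζ‖ ≤ γ⁻¹ := fun ζ hζ =>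
    ContinuousLinearMap.opNorm_le_bound _ (by positivity) (hAinvb ζ hζ)
  -- resolvent identity
  have hres : ∀ p ∈ Ξ, ∀ q ∈ Ξ, ∀ s : V →L[ℝ] ℝ,
      Ainv p s - Ainv q s = Ainv p ((A q - A p) (Ainv q s)) := by
    intro p hp q hq s
    have e1 : (A q - A p) (Ainv q s) = s - A p (Ainv q s) := by
      rw [ContinuousLinearMap.sub_apply, (hAinv q hq).2 s]
    rw [e1, map_sub, (hAinv p hp).1 (Ainv q s)]
  -- the represented vectors
  have hvex : ∀ ζ : EuclideanSpace ℝ (Fin d), ∃ v : V,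
      ∀ s : V →L[ℝ] ℝ, s v = (y.comp (Ainv ζ)) s :=
    fun ζ => (exists_riesz (y.comp (Ainv ζ))).exists
  choose vfun hvfun using hvex
  have hvfun' : ∀ ζ (s : V →L[ℝ] ℝ), s (vfun ζ) = y (Ainv ζ s) := fun ζ s => hvfun ζ s
  have hvbd : ∀ ζ ∈ Ξ, ‖vfun ζ‖ ≤ ‖y‖ * γ⁻¹ := by
    intro ζ hζ
    have h0 : ∀ s : V →L[ℝ] ℝ, s (0 : V) = (0 : (V →L[ℝ] ℝ) →L[ℝ] ℝ) s := by simp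
    have := riesz_diff (y.comp (Ainv ζ)) 0 (hvfun ζ) h0
    simp only [sub_zero] at this
    refine this.trans ?_
    calc ‖y.comp (Ainv ζ) - 0‖ = ‖y.comp (Ainv ζ)‖ := congrArg _ (sub_zero (y.comp (Ainv ζ)))
    _ ≤ ‖y‖ * ‖Ainv ζ‖ := ContinuousLinearMap.opNorm_comp_le _ _
    _ ≤ ‖y‖ * γ⁻¹ := mul_le_mul_of_nonneg_left (hAinvop ζ hζ) (norm_nonneg _)
  set f : EuclideanSpace ℝ (Fin d) → ℝ := fun ζ => y (Ainv ζ w) with hfdef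
  set ufun : EuclideanSpace ℝ (Fin d) → V := fun ζ => Ainv ζ w with hudef
  have hubd : ∀ ζ ∈ Ξ, ‖ufun ζ‖ ≤ γ⁻¹ * ‖w‖ := fun ζ hζ => hAinvb ζ hζ w
  set F : EuclideanSpace ℝ (Fin d) → V → V → (EuclideanSpace ℝ (Fin d) →L[ℝ] ℝ) :=
    fun ζ u v => fderiv ℝ (fun ζ' => A ζ' u v) ζ with hFdef
  set Φ : EuclideanSpace ℝ (Fin d) → (EuclideanSpace ℝ (Fin d) →L[ℝ] ℝ) :=
    fun ζ => -(F ζ (ufun ζ) (vfun ζ)) with hΦdef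
  have hdiffuv : ∀ (u v : V), ∀ ζ ∈ Ω, DifferentiableAt ℝ (fun ζ' => A ζ' u v) ζ := by
    intro u v ζ hζ
    exact ((hAdiff u v).differentiableOn one_ne_zero).differentiableAt (hΩo.mem_nhds hζ)
  have hFsubl : ∀ ζ ∈ Ω, ∀ u₁ u₂ v : V, F ζ (u₁ - u₂) v = F ζ u₁ v - F ζ u₂ v := by
    intro ζ hζ u₁ u₂ v
    have e : (fun ζ' => A ζ' (u₁ - u₂) v) = fun ζ' => A ζ' u₁ v - A ζ' u₂ v := by
      funext ζ'; rw [map_sub, ContinuousLinearMap.sub_apply]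
    simp only [hFdef]
    rw [e, fderiv_fun_sub (hdiffuv u₁ v ζ hζ) (hdiffuv u₂ v ζ hζ)]
  have hFsubr : ∀ ζ ∈ Ω, ∀ u v₁ v₂ : V, F ζ u (v₁ - v₂) = F ζ u v₁ - F ζ u v₂ := by
    intro ζ hζ u v₁ v₂
    have e : (fun ζ' => A ζ' u (v₁ - v₂)) = fun ζ' => A ζ' u v₁ - A ζ' u v₂ := by
      funext ζ'; rw [map_sub]
    simp only [hFdef]
    rw [e, fderiv_fun_sub (hdiffuv u v₁ ζ hζ) (hdiffuv u v₂ ζ hζ)]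
  -- the key local statement
  have key : ∀ ξ₀ ∈ Ω, ∃ ε > (0:ℝ), Metric.ball ξ₀ ε ⊆ Ω ∧
      (∀ ξ ∈ Metric.ball ξ₀ ε, HasFDerivAt f (Φ ξ) ξ) ∧
      (∀ ξ ∈ Metric.ball ξ₀ ε, ContinuousAt Φ ξ) := by
    intro ξ₀ hξ₀
    obtain ⟨r, hr, hball⟩ := Metric.nhds_basis_closedBall.mem_iff.mp (hΩo.mem_nhds hξ₀)
    set B := Metric.closedBall ξ₀ r with hBdef
    have hballΩ : Metric.ball ξ₀ r ⊆ Ω := Metric.ball_subset_closedBall.trans hball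
    have hBΞ : B ⊆ Ξ := hball.trans hΩΞ
    have hBcvx : Convex ℝ B := convex_closedBall _ _
    have hBcpt : IsCompact B := isCompact_closedBall _ _
    -- pointwise Lipschitz estimates for the bilinear form
    have hMuv : ∀ u v : V, ∃ M : ℝ, ∀ p ∈ B, ∀ q ∈ B,
        ‖A p u v - A q u v‖ ≤ M * dist p q := by
      intro u v
      have hcont : ContinuousOn (fun ζ => fderiv ℝ (fun ζ' => A ζ' u v) ζ) Ω :=
        (hAdiff u v).continuousOn_fderiv_of_isOpen hΩo le_rfl
      obtain ⟨M, hM⟩ := hBcpt.exists_bound_of_continuousOn (hcont.mono hball)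
      refine ⟨M, fun p hp q hq => ?_⟩
      have h := hBcvx.norm_image_sub_le_of_norm_fderiv_le
        (fun x hx => hdiffuv u v x (hball hx)) (fun x hx => hM x hx) hq hp
      rw [dist_eq_norm]; exact h
    -- uniform operator-norm Lipschitz estimate via Banach–Steinhaus
    have stepA : ∃ C : ℝ, 0 ≤ C ∧ ∀ p ∈ B, ∀ q ∈ B, ‖A p - A q‖ ≤ C * dist p q := by
      set ι := {pq : EuclideanSpace ℝ (Fin d) × EuclideanSpace ℝ (Fin d) //
        pq.1 ∈ B ∧ pq.2 ∈ B ∧ pq.1 ≠ pq.2} with hι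
      set T : ι → V →L[ℝ] V →L[ℝ] ℝ :=
        fun i => (dist i.1.1 i.1.2)⁻¹ • (A i.1.1 - A i.1.2) with hT
      have hpt : ∀ u v : V, ∃ M, ∀ i : ι, ‖T i u v‖ ≤ M := by
        intro u v
        obtain ⟨M, hM⟩ := hMuv u v
        refine ⟨M, fun i => ?_⟩
        obtain ⟨⟨p, q⟩, hp, hq, hne⟩ := i
        have hd : (0:ℝ) < dist p q := dist_pos.mpr hne
        have e1 : ‖T ⟨(p,q),hp,hq,hne⟩ u v‖ = (dist p q)⁻¹ * ‖A p u v - A q u v‖ := by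
          simp only [hT, ContinuousLinearMap.smul_apply, ContinuousLinearMap.sub_apply,
            norm_smul, Real.norm_eq_abs, abs_of_pos (inv_pos.mpr hd)]
        rw [e1]
        calc (dist p q)⁻¹ * ‖A p u v - A q u v‖
            ≤ (dist p q)⁻¹ * (M * dist p q) :=
              mul_le_mul_of_nonneg_left (hM p hp q hq) (by positivity)
        _ = M := by field_simp
      obtain ⟨C, hC⟩ := bilin_ubp T hpt
      refine ⟨max C 0, le_max_right _ _, fun p hp q hq => ?_⟩
      rcases eq_or_ne p q with h | h
      · subst h
        refine ContinuousLinearMap.opNorm_le_bound _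
          (mul_nonneg (le_max_right C 0) dist_nonneg) fun u => ?_
        refine ContinuousLinearMap.opNorm_le_bound _
          (mul_nonneg (mul_nonneg (le_max_right C 0) dist_nonneg) (norm_nonneg u)) fun v => ?_
        have e : (A p - A p) u v = 0 := by
          rw [ContinuousLinearMap.sub_apply, ContinuousLinearMap.sub_apply, sub_self]
        rw [e, norm_zero]
        exact mul_nonneg (mul_nonneg (mul_nonneg (le_max_right C 0) dist_nonneg)
          (norm_nonneg u)) (norm_nonneg v)
      · have hd : (0:ℝ) < dist p q := dist_pos.mpr h
        refine ContinuousLinearMap.opNorm_le_bound _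
          (mul_nonneg (le_max_right C 0) dist_nonneg) fun u => ?_
        refine ContinuousLinearMap.opNorm_le_bound _
          (mul_nonneg (mul_nonneg (le_max_right C 0) dist_nonneg) (norm_nonneg u)) fun v => ?_
        have e1 : (A p - A q) u v = dist p q * ((T ⟨(p,q), hp, hq, h⟩) u v) := by
          simp only [hT, ContinuousLinearMap.smul_apply, smul_eq_mul]
          rw [← mul_assoc, mul_inv_cancel₀ hd.ne', one_mul]
        have h2 : ‖(T ⟨(p,q), hp, hq, h⟩) u v‖ ≤ C * ‖u‖ * ‖v‖ := by
          calc ‖(T ⟨(p,q), hp, hq, h⟩) u v‖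
              ≤ ‖(T ⟨(p,q), hp, hq, h⟩) u‖ * ‖v‖ := ContinuousLinearMap.le_opNorm _ _
          _ ≤ (‖T ⟨(p,q), hp, hq, h⟩‖ * ‖u‖) * ‖v‖ :=
              mul_le_mul_of_nonneg_right (ContinuousLinearMap.le_opNorm _ _) (norm_nonneg _)
          _ ≤ (C * ‖u‖) * ‖v‖ :=
              mul_le_mul_of_nonneg_right
                (mul_le_mul_of_nonneg_right (hC _) (norm_nonneg _)) (norm_nonneg _)
          _ = C * ‖u‖ * ‖v‖ := by ring
        rw [e1, Real.norm_eq_abs, abs_mul, abs_of_pos hd, ← Real.norm_eq_abs]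
        calc dist p q * ‖(T ⟨(p,q), hp, hq, h⟩) u v‖
            ≤ dist p q * (C * ‖u‖ * ‖v‖) := mul_le_mul_of_nonneg_left h2 hd.le
        _ = C * (dist p q * ‖u‖ * ‖v‖) := by ring
        _ ≤ (max C 0) * (dist p q * ‖u‖ * ‖v‖) :=
            mul_le_mul_of_nonneg_right (le_max_left _ _) (by positivity)
        _ = (max C 0) * dist p q * ‖u‖ * ‖v‖ := by ring
    obtain ⟨C, hC0, hC⟩ := stepA
    -- pointwise bound of the fderiv of the bilinear form
    have stepA' : ∀ u v : V, ∀ ζ ∈ Metric.ball ξ₀ r, ‖F ζ u v‖ ≤ C * ‖u‖ * ‖v‖ := by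
      intro u v ζ hζ
      have hdA : HasFDerivAt (fun ζ' => A ζ' u v) (F ζ u v) ζ := by
        have := (hdiffuv u v ζ (hballΩ hζ)).hasFDerivAt
        simpa [hFdef] using this
      refine hdA.le_of_lip' (by positivity) ?_
      filter_upwards [Metric.isOpen_ball.mem_nhds hζ] with x hx
      have h1 : ‖A x u v - A ζ u v‖ ≤ ‖A x - A ζ‖ * ‖u‖ * ‖v‖ := by
        have e : A x u v - A ζ u v = ((A x - A ζ) u) v := by
          simp [ContinuousLinearMap.sub_apply]
        rw [e]
        calc ‖((A x - A ζ) u) v‖ ≤ ‖(A x - A ζ) u‖ * ‖v‖ :=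
              ContinuousLinearMap.le_opNorm _ _
        _ ≤ ‖A x - A ζ‖ * ‖u‖ * ‖v‖ :=
              mul_le_mul_of_nonneg_right (ContinuousLinearMap.le_opNorm _ _) (norm_nonneg _)
      have h2 : ‖A x - A ζ‖ ≤ C * dist x ζ :=
        hC x (Metric.ball_subset_closedBall hx) ζ (Metric.ball_subset_closedBall hζ)
      calc ‖A x u v - A ζ u v‖ ≤ ‖A x - A ζ‖ * ‖u‖ * ‖v‖ := h1
      _ ≤ (C * dist x ζ) * ‖u‖ * ‖v‖ := by gcongr
      _ = C * ‖u‖ * ‖v‖ * ‖x - ζ‖ := by rw [dist_eq_norm]; ring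
    -- Lipschitz estimates for Ainv, ufun, vfun on B
    have hAinvlip : ∀ p ∈ B, ∀ q ∈ B, ‖Ainv p - Ainv q‖ ≤ γ⁻¹ * γ⁻¹ * C * dist p q := by
      intro p hp q hq
      refine ContinuousLinearMap.opNorm_le_bound _ (by positivity) fun s => ?_
      rw [ContinuousLinearMap.sub_apply, hres p (hBΞ hp) q (hBΞ hq) s]
      calc ‖Ainv p ((A q - A p) (Ainv q s))‖
          ≤ γ⁻¹ * ‖(A q - A p) (Ainv q s)‖ := hAinvb p (hBΞ hp) _
      _ ≤ γ⁻¹ * (‖A q - A p‖ * ‖Ainv q s‖) := by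
            gcongr; exact ContinuousLinearMap.le_opNorm _ _
      _ ≤ γ⁻¹ * ((C * dist q p) * (γ⁻¹ * ‖s‖)) := by
            gcongr
            · exact hC q hq p hp
            · exact hAinvb q (hBΞ hq) s
      _ = γ⁻¹ * γ⁻¹ * C * dist p q * ‖s‖ := by rw [dist_comm q p]; ring
    have hulip : ∀ p ∈ B, ∀ q ∈ B,
        ‖ufun p - ufun q‖ ≤ (γ⁻¹ * γ⁻¹ * C * ‖w‖) * dist p q := by
      intro p hp q hq
      have e : ufun p - ufun q = (Ainv p - Ainv q) w := by
        simp [hudef, ContinuousLinearMap.sub_apply]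
      rw [e]
      calc ‖(Ainv p - Ainv q) w‖ ≤ ‖Ainv p - Ainv q‖ * ‖w‖ :=
            ContinuousLinearMap.le_opNorm _ _
      _ ≤ (γ⁻¹ * γ⁻¹ * C * dist p q) * ‖w‖ := by
            gcongr; exact hAinvlip p hp q hq
      _ = (γ⁻¹ * γ⁻¹ * C * ‖w‖) * dist p q := by ring
    have hvlip : ∀ p ∈ B, ∀ q ∈ B,
        ‖vfun p - vfun q‖ ≤ (‖y‖ * (γ⁻¹ * γ⁻¹ * C)) * dist p q := by
      intro p hp q hq
      have h0 := riesz_diff (y.comp (Ainv p)) (y.comp (Ainv q)) (hvfun p) (hvfun q)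
      have e : y.comp (Ainv p) - y.comp (Ainv q) = y.comp (Ainv p - Ainv q) :=
        (ContinuousLinearMap.comp_sub _ _ _).symm
      calc ‖vfun p - vfun q‖ ≤ ‖y.comp (Ainv p) - y.comp (Ainv q)‖ := h0
      _ = ‖y.comp (Ainv p - Ainv q)‖ := by rw [e]
      _ ≤ ‖y‖ * ‖Ainv p - Ainv q‖ := ContinuousLinearMap.opNorm_comp_le _ _
      _ ≤ ‖y‖ * (γ⁻¹ * γ⁻¹ * C * dist p q) := by
            gcongr; exact hAinvlip p hp q hq
      _ = (‖y‖ * (γ⁻¹ * γ⁻¹ * C)) * dist p q := by ring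
    refine ⟨r, hr, hballΩ, ?_, ?_⟩
    · -- HasFDerivAt
      intro ξ hξ
      have hξΩ : ξ ∈ Ω := hballΩ hξ
      have hξΞ : ξ ∈ Ξ := hΩΞ hξΩ
      have hξB : ξ ∈ B := Metric.ball_subset_closedBall hξ
      have hident : ∀ ζ ∈ Ξ, f ζ - f ξ =
          (A ξ) (Ainv ξ w) (vfun ζ) - (A ζ) (Ainv ξ w) (vfun ζ) := by
        intro ζ hζ
        calc f ζ - f ξ = y (Ainv ζ w) - y (Ainv ξ w) := by simp only [hfdef]
        _ = y (Ainv ζ w - Ainv ξ w) := (map_sub y _ _).symm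
        _ = y (Ainv ζ ((A ξ - A ζ) (Ainv ξ w))) := by rw [hres ζ hζ ξ hξΞ w]
        _ = ((A ξ - A ζ) (Ainv ξ w)) (vfun ζ) := (hvfun' ζ _).symm
        _ = (A ξ) (Ainv ξ w) (vfun ζ) - (A ζ) (Ainv ξ w) (vfun ζ) := by
              simp [ContinuousLinearMap.sub_apply]
      set R : EuclideanSpace ℝ (Fin d) → ℝ :=
        fun ζ => ((A ξ) (Ainv ξ w) - (A ζ) (Ainv ξ w)) (vfun ζ - vfun ξ) with hRdef
      have hfeq : f =ᶠ[𝓝 ξ] fun ζ =>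
          (f ξ + (A ξ) (Ainv ξ w) (vfun ξ)) - A ζ (Ainv ξ w) (vfun ξ) + R ζ := by
        filter_upwards [Metric.isOpen_ball.mem_nhds hξ] with ζ hζ
        have hζΞ : ζ ∈ Ξ := hBΞ (Metric.ball_subset_closedBall hζ)
        have h1 := hident ζ hζΞ
        have e2 : R ζ = (A ξ (Ainv ξ w) (vfun ζ) - A ξ (Ainv ξ w) (vfun ξ))
            - (A ζ (Ainv ξ w) (vfun ζ) - A ζ (Ainv ξ w) (vfun ξ)) := by
          rw [hRdef]
          simp only [ContinuousLinearMap.sub_apply, map_sub]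
          ring
        linarith [h1, e2]
      have hRd : HasFDerivAt R (0 : EuclideanSpace ℝ (Fin d) →L[ℝ] ℝ) ξ := by
        rw [hasFDerivAt_iff_isLittleO, Asymptotics.isLittleO_iff]
        intro c hc
        have hK2nn : (0:ℝ) ≤ (C * (γ⁻¹ * ‖w‖)) * (‖y‖ * (γ⁻¹ * γ⁻¹ * C)) := by positivity
        set K2 := (C * (γ⁻¹ * ‖w‖)) * (‖y‖ * (γ⁻¹ * γ⁻¹ * C)) with hK2
        have hδ : 0 < c / (K2 + 1) := by positivity
        filter_upwards [Metric.isOpen_ball.mem_nhds hξ,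
          Metric.closedBall_mem_nhds ξ hδ] with ζ hζb hζc
        have hζB : ζ ∈ B := Metric.ball_subset_closedBall hζb
        have hζΞ : ζ ∈ Ξ := hBΞ hζB
        have hRξ : R ξ = 0 := by simp [hRdef]
        have hb1 : ‖(A ξ) (Ainv ξ w) - (A ζ) (Ainv ξ w)‖
            ≤ (C * dist ξ ζ) * (γ⁻¹ * ‖w‖) := by
          have e : (A ξ) (Ainv ξ w) - (A ζ) (Ainv ξ w) = (A ξ - A ζ) (Ainv ξ w) := by
            simp [ContinuousLinearMap.sub_apply]
          rw [e]
          calc ‖(A ξ - A ζ) (Ainv ξ w)‖ ≤ ‖A ξ - A ζ‖ * ‖Ainv ξ w‖ :=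
                ContinuousLinearMap.le_opNorm _ _
          _ ≤ (C * dist ξ ζ) * (γ⁻¹ * ‖w‖) := by
                gcongr
                · exact hC ξ hξB ζ hζB
                · exact hAinvb ξ hξΞ w
        have hb2 : ‖vfun ζ - vfun ξ‖ ≤ (‖y‖ * (γ⁻¹ * γ⁻¹ * C)) * dist ζ ξ :=
          hvlip ζ hζB ξ hξB
        have hRb : ‖R ζ‖ ≤ K2 * (dist ζ ξ * dist ζ ξ) := by
          have h3 : ‖R ζ‖ ≤ ‖(A ξ) (Ainv ξ w) - (A ζ) (Ainv ξ w)‖ * ‖vfun ζ - vfun ξ‖ := by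
            rw [hRdef]; exact ContinuousLinearMap.le_opNorm _ _
          calc ‖R ζ‖ ≤ ‖(A ξ) (Ainv ξ w) - (A ζ) (Ainv ξ w)‖ * ‖vfun ζ - vfun ξ‖ := h3
          _ ≤ ((C * dist ξ ζ) * (γ⁻¹ * ‖w‖)) * ((‖y‖ * (γ⁻¹ * γ⁻¹ * C)) * dist ζ ξ) :=
                mul_le_mul hb1 hb2 (norm_nonneg _) (by positivity)
          _ = K2 * (dist ζ ξ * dist ζ ξ) := by rw [dist_comm ξ ζ, hK2]; ring
        have hd' : dist ζ ξ ≤ c / (K2 + 1) := by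
          simpa [Metric.mem_closedBall] using hζc
        have h6 : K2 * (c / (K2 + 1)) ≤ c := by
          rw [mul_comm, div_mul_eq_mul_div, div_le_iff₀ (by positivity : (0:ℝ) < K2 + 1)]
          nlinarith
        have h5 : K2 * dist ζ ξ ≤ c :=
          le_trans (mul_le_mul_of_nonneg_left hd' hK2nn) h6
        simp only [hRξ, ContinuousLinearMap.zero_apply, sub_zero]
        rw [← dist_eq_norm]
        nlinarith [dist_nonneg (x := ζ) (y := ξ), hRb, h5]
      have hgd : HasFDerivAt (fun ζ => A ζ (Ainv ξ w) (vfun ξ))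
          (F ξ (Ainv ξ w) (vfun ξ)) ξ := by
        have := (hdiffuv (Ainv ξ w) (vfun ξ) ξ hξΩ).hasFDerivAt
        simpa [hFdef] using this
      have hsum : HasFDerivAt (fun ζ =>
          (f ξ + (A ξ) (Ainv ξ w) (vfun ξ)) - A ζ (Ainv ξ w) (vfun ξ) + R ζ)
          ((0 : EuclideanSpace ℝ (Fin d) →L[ℝ] ℝ) - F ξ (Ainv ξ w) (vfun ξ) + 0) ξ :=
        ((hasFDerivAt_const _ _).sub hgd).add hRd
      have hf' : HasFDerivAt f
          ((0 : EuclideanSpace ℝ (Fin d) →L[ℝ] ℝ) - F ξ (Ainv ξ w) (vfun ξ) + 0) ξ :=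
        hsum.congr_of_eventuallyEq hfeq
      have hΦeq : Φ ξ = (0 : EuclideanSpace ℝ (Fin d) →L[ℝ] ℝ)
          - F ξ (Ainv ξ w) (vfun ξ) + 0 := by
        simp [hΦdef, hudef]
      rw [hΦeq]; exact hf'
    · -- ContinuousAt Φ
      intro ξ hξ
      have hξΩ : ξ ∈ Ω := hballΩ hξ
      have hξB : ξ ∈ B := Metric.ball_subset_closedBall hξ
      have hξΞ : ξ ∈ Ξ := hΩΞ hξΩ
      have hcF : ContinuousAt (fun ζ => F ζ (ufun ξ) (vfun ξ)) ξ := by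
        have hcont : ContinuousOn (fun ζ => fderiv ℝ (fun ζ' => A ζ' (ufun ξ) (vfun ξ)) ζ) Ω :=
          (hAdiff _ _).continuousOn_fderiv_of_isOpen hΩo le_rfl
        have := hcont.continuousAt (hΩo.mem_nhds hξΩ)
        simpa [hFdef] using this
      have hbound2 : ∀ ζ ∈ Metric.ball ξ₀ r, ‖Φ ζ - Φ ξ‖ ≤
          (C * ((γ⁻¹ * γ⁻¹ * C * ‖w‖)) * (‖y‖ * γ⁻¹)
            + C * (γ⁻¹ * ‖w‖) * (‖y‖ * (γ⁻¹ * γ⁻¹ * C))) * dist ζ ξ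
          + ‖F ζ (ufun ξ) (vfun ξ) - F ξ (ufun ξ) (vfun ξ)‖ := by
        intro ζ hζ
        have hζΩ : ζ ∈ Ω := hballΩ hζ
        have hζB : ζ ∈ B := Metric.ball_subset_closedBall hζ
        have hζΞ : ζ ∈ Ξ := hΩΞ hζΩ
        have e0 : Φ ζ - Φ ξ = F ξ (ufun ξ) (vfun ξ) - F ζ (ufun ζ) (vfun ζ) := by
          simp only [hΦdef, neg_sub_neg]
        have e1 : F ζ (ufun ζ) (vfun ζ) - F ξ (ufun ξ) (vfun ξ)
            = F ζ (ufun ζ - ufun ξ) (vfun ζ) + F ζ (ufun ξ) (vfun ζ - vfun ξ)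
              + (F ζ (ufun ξ) (vfun ξ) - F ξ (ufun ξ) (vfun ξ)) := by
          rw [hFsubl ζ hζΩ (ufun ζ) (ufun ξ) (vfun ζ),
            hFsubr ζ hζΩ (ufun ξ) (vfun ζ) (vfun ξ)]
          abel
        calc ‖Φ ζ - Φ ξ‖ = ‖F ζ (ufun ζ) (vfun ζ) - F ξ (ufun ξ) (vfun ξ)‖ := by
              rw [e0, norm_sub_rev]
        _ ≤ ‖F ζ (ufun ζ - ufun ξ) (vfun ζ)‖ + ‖F ζ (ufun ξ) (vfun ζ - vfun ξ)‖
            + ‖F ζ (ufun ξ) (vfun ξ) - F ξ (ufun ξ) (vfun ξ)‖ := by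
              rw [e1]; exact norm_add₃_le
        _ ≤ (C * ‖ufun ζ - ufun ξ‖ * ‖vfun ζ‖) + (C * ‖ufun ξ‖ * ‖vfun ζ - vfun ξ‖)
            + ‖F ζ (ufun ξ) (vfun ξ) - F ξ (ufun ξ) (vfun ξ)‖ :=
              add_le_add (add_le_add (stepA' _ _ ζ hζ) (stepA' _ _ ζ hζ)) le_rfl
        _ ≤ (C * ((γ⁻¹ * γ⁻¹ * C * ‖w‖) * dist ζ ξ) * (‖y‖ * γ⁻¹))
            + (C * (γ⁻¹ * ‖w‖) * ((‖y‖ * (γ⁻¹ * γ⁻¹ * C)) * dist ζ ξ))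
            + ‖F ζ (ufun ξ) (vfun ξ) - F ξ (ufun ξ) (vfun ξ)‖ := by
              gcongr
              · exact hulip ζ hζB ξ hξB
              · exact hvbd ζ hζΞ
              · exact hubd ξ hξΞ
              · exact hvlip ζ hζB ξ hξB
        _ = (C * ((γ⁻¹ * γ⁻¹ * C * ‖w‖)) * (‖y‖ * γ⁻¹)
            + C * (γ⁻¹ * ‖w‖) * (‖y‖ * (γ⁻¹ * γ⁻¹ * C))) * dist ζ ξ
            + ‖F ζ (ufun ξ) (vfun ξ) - F ξ (ufun ξ) (vfun ξ)‖ := by ring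
      have hb0 : Tendsto (fun ζ =>
          (C * ((γ⁻¹ * γ⁻¹ * C * ‖w‖)) * (‖y‖ * γ⁻¹)
            + C * (γ⁻¹ * ‖w‖) * (‖y‖ * (γ⁻¹ * γ⁻¹ * C))) * dist ζ ξ
          + ‖F ζ (ufun ξ) (vfun ξ) - F ξ (ufun ξ) (vfun ξ)‖) (𝓝 ξ) (𝓝 0) := by
        have t1' : Continuous fun ζ : EuclideanSpace ℝ (Fin d) => dist ζ ξ :=
          continuous_id.dist continuous_const
        have t1 : Tendsto (fun ζ : EuclideanSpace ℝ (Fin d) => dist ζ ξ) (𝓝 ξ) (𝓝 0) := by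
          simpa using t1'.tendsto ξ
        have t2 : Tendsto (fun ζ => ‖F ζ (ufun ξ) (vfun ξ) - F ξ (ufun ξ) (vfun ξ)‖)
            (𝓝 ξ) (𝓝 0) := tendsto_iff_norm_sub_tendsto_zero.mp hcF
        simpa using (t1.const_mul _).add t2
      have hnt : Tendsto (fun ζ => ‖Φ ζ - Φ ξ‖) (𝓝 ξ) (𝓝 0) := by
        refine squeeze_zero' (Eventually.of_forall fun ζ => norm_nonneg _) ?_ hb0
        filter_upwards [Metric.isOpen_ball.mem_nhds hξ] with ζ hζ using hbound2 ζ hζ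
      exact tendsto_iff_norm_sub_tendsto_zero.mpr hnt
  -- assemble
  have hfd : ∀ ξ ∈ Ω, HasFDerivAt f (Φ ξ) ξ := by
    intro ξ hξ
    obtain ⟨ε, hε, _, hd, _⟩ := key ξ hξ
    exact hd ξ (Metric.mem_ball_self hε)
  have hΦc : ∀ ξ ∈ Ω, ContinuousAt Φ ξ := by
    intro ξ hξ
    obtain ⟨ε, hε, _, _, hc⟩ := key ξ hξ
    exact hc ξ (Metric.mem_ball_self hε)
  have hfderiv : ∀ ξ ∈ Ω, fderiv ℝ f ξ = Φ ξ := fun ξ hξ => (hfd ξ hξ).fderiv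
  have hfc1 : ContDiffOn ℝ 1 f Ω := by
    have hdo : DifferentiableOn ℝ f Ω := fun ξ hξ =>
      (hfd ξ hξ).differentiableAt.differentiableWithinAt
    have hco : ContinuousOn (fderiv ℝ f) Ω := by
      intro ξ hξ
      have : ContinuousAt (fderiv ℝ f) ξ := by
        refine (hΦc ξ hξ).congr ?_
        filter_upwards [hΩo.mem_nhds hξ] with ζ hζ
        exact (hfderiv ζ hζ).symm
      exact this.continuousWithinAt
    have h01 : (1 : WithTop ℕ∞) = 0 + 1 := by norm_num
    rw [h01, contDiffOn_succ_iff_fderiv_of_isOpen hΩo]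
    exact ⟨hdo, by simp, contDiffOn_zero.mpr hco⟩
  refine ⟨hfc1, fun ξ hξ => ⟨?_, ?_⟩⟩
  · exact exists_riesz (y.comp (Ainv ξ))
  · intro v hv j
    have hvv : v = vfun ξ := by
      have hEU := exists_riesz (y.comp (Ainv ξ))
      exact (hEU.unique hv (hvfun ξ))
    rw [hvv, hfderiv ξ hξ]
    simp only [hΦdef, ContinuousLinearMap.neg_apply, hFdef]
    rfl
end

section
/- Let Z be a nonempty set and let ℓ^∞(Z) be the Banach space of bounded real-valued functions on Z with the supremum norm. Define Φ : ℓ^∞(Z) → ℝ by Φ(h) = inf_{z∈Z} h(z). Then: (i) Φ is Lipschitz continuous with constant 1, i.e., |Φ(h₁) − Φ(h₂)| ≤ sup_{z∈Z}|h₁(z) − h₂(z)| for all h₁, h₂ ∈ ℓ^∞(Z); (ii) Φ is concave; (iii) Φ is Hadamard directionally differentiable at every h₀ ∈ ℓ^∞(Z): for every h ∈ ℓ^∞(Z), every sequence (t_n) of positive reals with t_n → 0, and every sequence (h_n) in ℓ^∞(Z) with sup_{z∈Z}|h_n(z) − h(z)| → 0, the quotients (Φ(h₀ + t_n h_n) −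 Φ(h₀))/t_n converge to Φ'_{h₀}(h) = lim_{ε↓0} inf{ h(z) : z ∈ Z, h₀(z) ≤ Φ(h₀) + ε }. -/
open MeasureTheory Filter Topology
open scoped RealInnerProductSpace ENNReal

private lemma aux_half_lip {Z : Type*} [Nonempty Z] (h₁ h₂ : Z → ℝ) (M₁ M₂ : ℝ)
    (b₁ : ∀ z, |h₁ z| ≤ M₁) (b₂ : ∀ z, |h₂ z| ≤ M₂) :
    (⨅ z : Z, h₁ z) - (⨅ z : Z, h₂ z) ≤ ⨆ z : Z, |h₁ z - h₂ z| := by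
  have bddS : BddAbove (Set.range fun z : Z => |h₁ z - h₂ z|) := by
    refine ⟨M₁ + M₂, ?_⟩
    rintro r ⟨z, rfl⟩
    exact (abs_sub _ _).trans (add_le_add (b₁ z) (b₂ z))
  have bdd₁ : BddBelow (Set.range h₁) := by
    refine ⟨-M₁, ?_⟩; rintro r ⟨z, rfl⟩; exact neg_le_of_abs_le (b₁ z)
  set S := ⨆ z : Z, |h₁ z - h₂ z| with hS
  have key : ∀ z : Z, (⨅ z : Z, h₁ z) - S ≤ h₂ z := by
    intro z
    have h1 : (⨅ z : Z, h₁ z) ≤ h₁ z := ciInf_le bdd₁ z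
    have h2 : h₁ z - h₂ z ≤ S := le_trans (le_abs_self _) (le_ciSup bddS z)
    linarith
  have := le_ciInf key
  linarith

set_option maxHeartbeats 2000000 in
/-- The infimal functional `Φ(h) = inf_z h(z)` on `ℓ^∞(Z)` is
1-Lipschitz, concave, and Hadamard directionally differentiable with the stated derivative. -/
theorem statement19
    {Z : Type*} [Nonempty Z]
    (Φ : (Z → ℝ) → ℝ)
    (hΦ : ∀ h : Z → ℝ, Φ h = ⨅ z : Z, h z) :
    (∀ h₁ h₂ : Z → ℝ, (∃ M : ℝ, ∀ z, |h₁ z| ≤ M) → (∃ M : ℝ, ∀ z, |h₂ z| ≤ M) →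
      |Φ h₁ - Φ h₂| ≤ ⨆ z : Z, |h₁ z - h₂ z|) ∧
    ConcaveOn ℝ {h : Z → ℝ | ∃ M : ℝ, ∀ z, |h z| ≤ M} Φ ∧
    (∀ h₀ h : Z → ℝ, (∃ M : ℝ, ∀ z, |h₀ z| ≤ M) → (∃ M : ℝ, ∀ z, |h z| ≤ M) →
      ∃ D : ℝ,
        Tendsto (fun ε : ℝ => sInf {r : ℝ | ∃ z : Z, h₀ z ≤ Φ h₀ + ε ∧ r = h z})
          (𝓝[>] (0 : ℝ)) (𝓝 D) ∧
        ∀ (t : ℕ → ℝ) (hs : ℕ → Z → ℝ),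
          (∀ n, 0 < t n) → Tendsto t atTop (𝓝 0) →
          (∀ n, ∃ M : ℝ, ∀ z, |hs n z| ≤ M) →
          Tendsto (fun n => ⨆ z : Z, |hs n z - h z|) atTop (𝓝 0) →
          Tendsto (fun n => (Φ (h₀ + t n • hs n) - Φ h₀) / t n) atTop (𝓝 D)) := by
  refine ⟨?_, ?_, ?_⟩
  · -- Lipschitz
    rintro h₁ h₂ ⟨M₁, hM₁⟩ ⟨M₂, hM₂⟩
    rw [hΦ h₁, hΦ h₂, abs_sub_le_iff]
    constructor
    · exact aux_half_lip h₁ h₂ M₁ M₂ hM₁ hM₂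
    · have := aux_half_lip h₂ h₁ M₂ M₁ hM₂ hM₁
      simpa [abs_sub_comm] using this
  · -- Concave
    constructor
    · rintro x ⟨Mx, hx⟩ y ⟨My, hy⟩ a b ha hb hab
      refine ⟨a * Mx + b * My, fun z => ?_⟩
      have : |(a • x + b • y) z| ≤ a * |x z| + b * |y z| := by
        simp only [Pi.add_apply, Pi.smul_apply, smul_eq_mul]
        calc |a * x z + b * y z| ≤ |a * x z| + |b * y z| := abs_add_le _ _
          _ = a * |x z| + b * |y z| := by rw [abs_mul, abs_mul, abs_of_nonneg ha, abs_of_nonneg hb]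
      exact this.trans (add_le_add (by nlinarith [abs_nonneg (x z), hx z]) (by nlinarith [abs_nonneg (y z), hy z]))
    · rintro x ⟨Mx, hx⟩ y ⟨My, hy⟩ a b ha hb hab
      rw [hΦ, hΦ, hΦ]
      have bddx : BddBelow (Set.range x) := ⟨-Mx, by rintro r ⟨z, rfl⟩; exact neg_le_of_abs_le (hx z)⟩
      have bddy : BddBelow (Set.range y) := ⟨-My, by rintro r ⟨z, rfl⟩; exact neg_le_of_abs_le (hy z)⟩
      rw [smul_eq_mul, smul_eq_mul]
      refine le_ciInf fun z => ?_
      have h1 : (⨅ z : Z, x z) ≤ x z := ciInf_le bddx z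
      have h2 : (⨅ z : Z, y z) ≤ y z := ciInf_le bddy z
      simp only [Pi.add_apply, Pi.smul_apply, smul_eq_mul]
      nlinarith
  · -- Hadamard directional differentiability
    rintro h₀ h ⟨M₀, hM₀⟩ ⟨M, hM⟩
    have hMnn : 0 ≤ M := le_trans (abs_nonneg _) (hM (Classical.arbitrary Z))
    set c := Φ h₀ with hcdef
    have hc' : c = ⨅ z : Z, h₀ z := hΦ h₀
    have bdd₀ : BddBelow (Set.range h₀) := ⟨-M₀, by rintro r ⟨z, rfl⟩; exact neg_le_of_abs_le (hM₀ z)⟩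
    have hcle : ∀ z, c ≤ h₀ z := fun z => hc' ▸ ciInf_le bdd₀ z
    have hexist : ∀ ε : ℝ, 0 < ε → ∃ z, h₀ z < c + ε := by
      intro ε hε
      have : (⨅ z : Z, h₀ z) < c + ε := by rw [← hc']; linarith
      exact exists_lt_of_ciInf_lt this
    set S : ℝ → Set ℝ := fun ε => {r : ℝ | ∃ z : Z, h₀ z ≤ c + ε ∧ r = h z} with hSdef
    set g : ℝ → ℝ := fun ε => sInf (S ε) with hgdef
    have Sne : ∀ ε : ℝ, 0 < ε → (S ε).Nonempty := by
      intro ε hε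
      obtain ⟨z, hz⟩ := hexist ε hε
      exact ⟨h z, z, hz.le, rfl⟩
    have Sbdd : ∀ ε : ℝ, BddBelow (S ε) := by
      intro ε; refine ⟨-M, ?_⟩; rintro r ⟨z, _, rfl⟩; exact neg_le_of_abs_le (hM z)
    have gle : ∀ ε : ℝ, 0 < ε → g ε ≤ M := by
      intro ε hε
      obtain ⟨r, z, hz, rfl⟩ := Sne ε hε
      exact (csInf_le (Sbdd ε) ⟨z, hz, rfl⟩).trans (le_of_abs_le (hM z))
    have ganti : ∀ ε₁ ε₂ : ℝ, 0 < ε₁ → ε₁ ≤ ε₂ → g ε₂ ≤ g ε₁ := by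
      intro ε₁ ε₂ h1 h12
      refine csInf_le_csInf (Sbdd ε₂) (Sne ε₁ h1) ?_
      rintro r ⟨z, hz, rfl⟩; exact ⟨z, hz.trans (by linarith), rfl⟩
    set T : Set ℝ := {r : ℝ | ∃ ε : ℝ, 0 < ε ∧ r = g ε} with hTdef
    have Tne : T.Nonempty := ⟨g 1, 1, one_pos, rfl⟩
    have Tbdd : BddAbove T := ⟨M, by rintro r ⟨ε, hε, rfl⟩; exact gle ε hε⟩
    set D := sSup T with hDdef
    have gleD : ∀ ε : ℝ, 0 < ε → g ε ≤ D := fun ε hε => le_csSup Tbdd ⟨ε, hε, rfl⟩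
    refine ⟨D, ?_, ?_⟩
    · rw [tendsto_order]
      constructor
      · intro a ha
        obtain ⟨r, ⟨ε₀, hε₀, rfl⟩, har⟩ := exists_lt_of_lt_csSup Tne ha
        filter_upwards [Ioo_mem_nhdsGT_of_mem (Set.left_mem_Ico.2 hε₀)] with ε hε
        exact lt_of_lt_of_le har (ganti ε ε₀ hε.1 hε.2.le)
      · intro b hb
        filter_upwards [self_mem_nhdsWithin] with ε hε
        exact lt_of_le_of_lt (gleD ε hε) hb
    · intro t hs ht htlim hsb hslim
      set s : ℕ → ℝ := fun n => ⨆ z : Z, |hs n z - h z| with hsdef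
      have sbddA : ∀ n, BddAbove (Set.range fun z : Z => |hs n z - h z|) := by
        intro n
        obtain ⟨Mn, hMn⟩ := hsb n
        exact ⟨Mn + M, by rintro r ⟨z, rfl⟩; exact (abs_sub _ _).trans (add_le_add (hMn z) (hM z))⟩
      have sle : ∀ n z, |hs n z - h z| ≤ s n := fun n z => le_ciSup (sbddA n) z
      have snn : ∀ n, 0 ≤ s n := fun n =>
        le_trans (abs_nonneg _) (sle n (Classical.arbitrary Z))
      rw [Metric.tendsto_atTop]
      intro ε hε
      -- pick ε₀
      obtain ⟨ε₀, hε₀, hgε₀⟩ : ∃ ε₀ : ℝ, 0 < ε₀ ∧ D - ε / 4 < g ε₀ := by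
        obtain ⟨r, ⟨ε₀, hε₀, rfl⟩, hr⟩ := exists_lt_of_lt_csSup Tne
          (show D - ε / 4 < D by linarith)
        exact ⟨ε₀, hε₀, hr⟩
      set K : ℝ := 2 * (M + 1) + ε / 4 with hKdef
      have hK : 0 < K := by positivity
      -- eventually s n < min (ε/4) 1
      have hsev : ∀ᶠ n in atTop, s n < min (ε / 4) 1 := by
        have := Metric.tendsto_atTop.1 hslim (min (ε / 4) 1) (by positivity)
        obtain ⟨N, hN⟩ := this
        filter_upwards [eventually_ge_atTop N] with n hn
        have := hN n hn
        rwa [Real.dist_eq, sub_zero, abs_of_nonneg (snn n)] at this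
      have htev : ∀ᶠ n in atTop, t n < ε₀ / K := by
        have := Metric.tendsto_atTop.1 htlim (ε₀ / K) (by positivity)
        obtain ⟨N, hN⟩ := this
        filter_upwards [eventually_ge_atTop N] with n hn
        have := hN n hn
        rw [Real.dist_eq, sub_zero, abs_of_pos (ht n)] at this
        exact this
      obtain ⟨N, hN⟩ := ((hsev.and htev).exists_forall_of_atTop)
      refine ⟨N, fun n hn => ?_⟩
      obtain ⟨hsn, htn⟩ := hN n hn
      have hsn4 : s n < ε / 4 := lt_of_lt_of_le hsn (min_le_left _ _)
      have hsn1 : s n ≤ 1 := le_of_lt (lt_of_lt_of_le hsn (min_le_right _ _))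
      have htnpos := ht n
      have hsbnd : ∀ z, |hs n z| ≤ M + 1 := by
        intro z
        calc |hs n z| = |h z + (hs n z - h z)| := by ring_nf
          _ ≤ |h z| + |hs n z - h z| := abs_add_le _ _
          _ ≤ M + s n := add_le_add (hM z) (sle n z)
          _ ≤ M + 1 := by linarith
      set F : Z → ℝ := fun z => h₀ z + t n * hs n z with hFdef
      have hFeq : Φ (h₀ + t n • hs n) = ⨅ z : Z, F z := by
        rw [hΦ]
        exact iInf_congr fun z => by simp [hFdef, Pi.add_apply, Pi.smul_apply, smul_eq_mul]
      set cn : ℝ := ⨅ z : Z, F z with hcndef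
      have bddF : BddBelow (Set.range F) := by
        refine ⟨-M₀ - t n * (M + 1), ?_⟩
        rintro r ⟨z, rfl⟩
        show -M₀ - t n * (M + 1) ≤ h₀ z + t n * hs n z
        have h1 : -M₀ ≤ h₀ z := neg_le_of_abs_le (hM₀ z)
        have h2 : -(t n * (M + 1)) ≤ t n * hs n z := by
          have := mul_le_mul_of_nonneg_left (neg_le_of_abs_le (hsbnd z)) htnpos.le
          linarith
        linarith
      have hcnle : ∀ z, cn ≤ F z := fun z => ciInf_le bddF z
      -- upper bound
      have tq : 0 < t n * (ε / 4) := by positivity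
      obtain ⟨r, ⟨z₁, hz₁, rfl⟩, hr⟩ := exists_lt_of_csInf_lt (Sne _ tq)
        (lt_add_of_pos_right (g (t n * (ε / 4))) (show (0:ℝ) < ε / 4 by positivity))
      have hz1h : h z₁ < D + ε / 4 :=
        lt_of_lt_of_le hr (by linarith [gleD _ tq])
      have hup : cn - c ≤ t n * (D + 3 * (ε / 4)) := by
        have h1 : cn ≤ h₀ z₁ + t n * hs n z₁ := hcnle z₁
        have h2 : hs n z₁ ≤ h z₁ + s n := by
          have := sle n z₁
          have := le_abs_self (hs n z₁ - h z₁)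
          linarith
        have h3 : t n * hs n z₁ ≤ t n * (h z₁ + s n) :=
          mul_le_mul_of_nonneg_left h2 htnpos.le
        have h5 : t n * h z₁ < t n * (D + ε / 4) := by
          exact mul_lt_mul_of_pos_left hz1h htnpos
        have h6 : t n * s n < t n * (ε / 4) := mul_lt_mul_of_pos_left hsn4 htnpos
        nlinarith
      -- lower bound
      have hcnlt : (⨅ z : Z, F z) < cn + t n * (ε / 4) := by
        rw [← hcndef]; linarith
      obtain ⟨z₂, hz₂⟩ := exists_lt_of_ciInf_lt hcnlt
      have hcnup : cn ≤ c + t n * (M + 1) := by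
        have : ∀ z, cn - t n * (M + 1) ≤ h₀ z := by
          intro z
          have h1 : cn ≤ h₀ z + t n * hs n z := hcnle z
          have h2 : t n * hs n z ≤ t n * (M + 1) :=
            mul_le_mul_of_nonneg_left (le_of_abs_le (hsbnd z)) htnpos.le
          linarith
        have := le_ciInf this
        rw [← hc'] at this
        linarith
      have htK : t n * K < ε₀ := (lt_div_iff₀ hK).1 htn
      have hz₂S : h₀ z₂ ≤ c + ε₀ := by
        have h2 : -(t n * (M + 1)) ≤ t n * hs n z₂ := by
          have := mul_le_mul_of_nonneg_left (neg_le_of_abs_le (hsbnd z₂)) htnpos.le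
          linarith [this]
        have : h₀ z₂ < c + t n * K := by
          have hFz₂ : h₀ z₂ + t n * hs n z₂ < cn + t n * (ε / 4) := hz₂
          rw [hKdef]; nlinarith
        linarith
      have hz2h : D - ε / 4 < h z₂ :=
        lt_of_lt_of_le hgε₀ (csInf_le (Sbdd ε₀) ⟨z₂, hz₂S, rfl⟩)
      have hlow : t n * (D - 3 * (ε / 4)) < cn - c := by
        have h2 : h z₂ - s n ≤ hs n z₂ := by
          have := sle n z₂
          have := neg_abs_le (hs n z₂ - h z₂)
          linarith
        have h3 : t n * (h z₂ - s n) ≤ t n * hs n z₂ :=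
          mul_le_mul_of_nonneg_left h2 htnpos.le
        have h4 : c ≤ h₀ z₂ := hcle z₂
        have hFz₂ : h₀ z₂ + t n * hs n z₂ < cn + t n * (ε / 4) := hz₂
        have h5 : t n * (D - ε / 4) < t n * h z₂ := mul_lt_mul_of_pos_left hz2h htnpos
        have h6 : t n * s n < t n * (ε / 4) := mul_lt_mul_of_pos_left hsn4 htnpos
        nlinarith
      rw [Real.dist_eq, hFeq, abs_sub_lt_iff]
      have hq1 : (cn - c) / t n ≤ D + 3 * (ε / 4) := by
        rw [div_le_iff₀ htnpos]; nlinarith [hup]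
      have hq2 : D - 3 * (ε / 4) < (cn - c) / t n := by
        rw [lt_div_iff₀ htnpos]; nlinarith [hlow]
      constructor <;> linarith
end
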